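/- arXiv:2503.24151 — 7 statements merged into one kernel-verified Lean document; each statement's English description precedes it below -/
import Mathlib

section
/- Let M ∈ ℝ^{n×m}, ε ∈ ℝ^n, and ϱ > 0. Suppose u* ∈ ℝ^m minimizes f(u) = ‖Mu + ε‖ + ϱ‖u‖ over ℝ^m, and that u* ≠ 0 and Mu* + ε ≠ 0. Set ρ = ϱ‖Mu* + ε‖/‖u*‖. Then u* is the unique minimizer of g(u) = ‖Mu + ε‖² + ρ‖u‖² over ℝ^m. -/
open Matrix BigOperators

/-!
Write `A = ‖Mu* + ε‖`, `B = ‖u*‖`, so that `ρB = ϱA`. For any `u`, with `x = ‖Mu + ε‖`, `y = ‖u‖`,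
`x² + ρy² - A² - ρB² - (x - A)² - ρ(y - B)² = 2A((x + ϱy) - (A + ϱB)) ≥ 0`
by minimality of `u*`, so `g(u) ≥ g(u*)` with equality only if `x = A` and `y = B`.
In that case the midpoint of `u` and `u*` has residual at most `A` (convexity) and,
if `u ≠ u*`, norm `< B` (strict convexity of the Euclidean norm), contradicting minimality.
-/

/-- Euclidean norm of a vector in `ℝ^a`. -/
noncomputable def euclNormFin {a : ℕ} (x : Fin a → ℝ) : ℝ := Real.sqrt (∑ i, x i ^ 2)

theorem sq_add_mul_sq_add_sq_le {A B x y ϱ ρ : ℝ} (hA : 0 ≤ A) (hρB : ρ * B = ϱ * A)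
    (hle : A + ϱ * B ≤ x + ϱ * y) :
    A ^ 2 + ρ * B ^ 2 + ((x - A) ^ 2 + ρ * (y - B) ^ 2) ≤ x ^ 2 + ρ * y ^ 2 := by
  linear_combination 2 * mul_le_mul_of_nonneg_left hle hA + 2 * (B - y) * hρB

theorem convexOn_norm_linearMap_add {E F : Type*} [AddCommGroup E] [Module ℝ E]
    [NormedAddCommGroup F] [NormedSpace ℝ F] (L : E →ₗ[ℝ] F) (c : F) :
    ConvexOn ℝ Set.univ (fun u => ‖L u + c‖) := by
  simpa [Function.comp_def, add_comm] using
    ((convexOn_norm convex_univ).translate_right c).comp_linearMap L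

section StrictConvexSpace

variable {E : Type*} [NormedAddCommGroup E] [NormedSpace ℝ E] [StrictConvexSpace ℝ E]
  {r : E → ℝ} {ϱ : ℝ} {u₀ : E}

theorem eq_of_apply_le_of_norm_eq (hr : ConvexOn ℝ Set.univ r) (hϱ : 0 < ϱ)
    (hmin : ∀ u, r u₀ + ϱ * ‖u₀‖ ≤ r u + ϱ * ‖u‖) {u : E} (hru : r u ≤ r u₀)
    (hnorm : ‖u‖ = ‖u₀‖) : u = u₀ := by
  by_contra hne
  set v := (1 / 2 : ℝ) • u + (1 / 2 : ℝ) • u₀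
  have hrv : r v ≤ r u₀ := by
    have := hr.2 (Set.mem_univ u) (Set.mem_univ u₀) (by norm_num : (0 : ℝ) ≤ 1 / 2)
      (by norm_num : (0 : ℝ) ≤ 1 / 2) (by norm_num)
    simp only [smul_eq_mul] at this
    linarith
  have hnv : ‖v‖ < ‖u₀‖ :=
    norm_combo_lt_of_ne hnorm.le le_rfl hne (by norm_num) (by norm_num) (by norm_num)
  linarith [hmin v, mul_lt_mul_of_pos_left hnv hϱ]

theorem sq_add_mul_sq_lt_of_forall_le (hr : ConvexOn ℝ Set.univ r) (hϱ : 0 < ϱ)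
    (hmin : ∀ u, r u₀ + ϱ * ‖u₀‖ ≤ r u + ϱ * ‖u‖) (hr₀ : 0 < r u₀) (hu₀ : u₀ ≠ 0)
    {u : E} (hu : u ≠ u₀) :
    r u₀ ^ 2 + ϱ * r u₀ / ‖u₀‖ * ‖u₀‖ ^ 2 < r u ^ 2 + ϱ * r u₀ / ‖u₀‖ * ‖u‖ ^ 2 := by
  set ρ := ϱ * r u₀ / ‖u₀‖
  have hρ : 0 < ρ := by positivity
  have hρu₀ : ρ * ‖u₀‖ = ϱ * r u₀ := div_mul_cancel₀ _ (norm_ne_zero_iff.mpr hu₀)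
  have key := sq_add_mul_sq_add_sq_le hr₀.le hρu₀ (hmin u)
  suffices 0 < (r u - r u₀) ^ 2 + ρ * (‖u‖ - ‖u₀‖) ^ 2 by linarith
  by_cases hnorm : ‖u‖ = ‖u₀‖
  · have hru : r u ≠ r u₀ := fun h => hu (eq_of_apply_le_of_norm_eq hr hϱ hmin h.le hnorm)
    have := sub_ne_zero.mpr hru
    positivity
  · have := sub_ne_zero.mpr hnorm
    positivity

end StrictConvexSpace

theorem euclNormFin_eq_norm {a : ℕ} (x : Fin a → ℝ) : euclNormFin x = ‖WithLp.toLp 2 x‖ := by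
  simp [euclNormFin, EuclideanSpace.norm_eq]

/-- If `u*` minimizes `f(u) = ‖Mu + ε‖ + ϱ‖u‖`, with `u* ≠ 0` and `Mu* + ε ≠ 0`,
then with `ρ = ϱ‖Mu* + ε‖/‖u*‖` the point `u*` is the unique minimizer of
`g(u) = ‖Mu + ε‖² + ρ‖u‖²`. -/
theorem stmt2 {n m : ℕ} (M : Matrix (Fin n) (Fin m) ℝ) (ε : Fin n → ℝ)
    (ϱ : ℝ) (hϱ : 0 < ϱ) (ustar : Fin m → ℝ)
    (hmin : ∀ u : Fin m → ℝ,
      euclNormFin (M *ᵥ ustar + ε) + ϱ * euclNormFin ustar ≤ euclNormFin (M *ᵥ u + ε) + ϱ * euclNormFin u)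
    (hu : ustar ≠ 0) (hMu : M *ᵥ ustar + ε ≠ 0)
    (ρ : ℝ) (hρ : ρ = ϱ * euclNormFin (M *ᵥ ustar + ε) / euclNormFin ustar) :
    ∀ u : Fin m → ℝ, u ≠ ustar →
      euclNormFin (M *ᵥ ustar + ε) ^ 2 + ρ * euclNormFin ustar ^ 2
        < euclNormFin (M *ᵥ u + ε) ^ 2 + ρ * euclNormFin u ^ 2 := by
  intro u hne
  set r : EuclideanSpace ℝ (Fin m) → ℝ := fun v => ‖toLpLin 2 2 M v + WithLp.toLp 2 ε‖
  have hr : ∀ v : Fin m → ℝ, euclNormFin (M *ᵥ v + ε) = r (WithLp.toLp 2 v) := fun v => by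
    simp only [r, euclNormFin_eq_norm, toLpLin_apply, WithLp.toLp_add]
  have hmin' : ∀ v, r (WithLp.toLp 2 ustar) + ϱ * ‖WithLp.toLp 2 ustar‖ ≤ r v + ϱ * ‖v‖ :=
    fun v => by simpa only [hr, euclNormFin_eq_norm] using hmin v.ofLp
  have hr₀ : 0 < r (WithLp.toLp 2 ustar) := by
    rw [← hr, euclNormFin_eq_norm]
    exact norm_pos_iff.mpr ((WithLp.toLp_eq_zero 2).not.mpr hMu)
  rw [hρ]
  simp only [hr, euclNormFin_eq_norm]
  exact sq_add_mul_sq_lt_of_forall_le (convexOn_norm_linearMap_add _ _) hϱ hmin' hr₀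
    ((WithLp.toLp_eq_zero 2).not.mpr hu) ((WithLp.toLp_injective 2).ne hne)
end

section
/- Let M ∈ ℝ^{n×m}, ε ∈ ℝ^n, and ϱ ∈ ℝ^m with nonnegative entries. Suppose u* ∈ ℝ^m minimizes f(u) = ‖Mu + ε‖ + Σ_{i=1}^m ϱ_i|u_i| over ℝ^m, and that Mu* + ε ≠ 0. Set ρ = 2‖Mu* + ε‖·ϱ ∈ ℝ^m. Then u* also minimizes g(u) = ‖Mu + ε‖² + Σ_{i=1}^m ρ_i|u_i| over ℝ^m. -/
open Matrix BigOperators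

/-!
The objectives can be compared directly, without subdifferentials. With `N = ‖Mu* + ε‖` and
`a = ‖Mu + ε‖`, minimality of `u*` for `f` says the ℓ1 penalty grows by at least `N - a` from
`u*` to `u`, so `g(u) - g(u*) ≥ a² - N² + 2N(N - a) = (a - N)² ≥ 0`.
-/

/-- Euclidean norm of a vector in `ℝ^a`. -/
noncomputable def enormFin {a : ℕ} (x : Fin a → ℝ) : ℝ := Real.sqrt (∑ i, x i ^ 2)

lemma enormFin_nonneg {a : ℕ} (x : Fin a → ℝ) : 0 ≤ enormFin x := Real.sqrt_nonneg _

lemma sq_add_two_mul_le_of_add_le {α : Type*} {f R : α → ℝ} {x : α} (hfx : 0 ≤ f x)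
    (hmin : ∀ u, f x + R x ≤ f u + R u) (u : α) :
    f x ^ 2 + 2 * f x * R x ≤ f u ^ 2 + 2 * f x * R u := by
  nlinarith [hmin u, sq_nonneg (f u - f x)]

theorem stmt3_general {n m : ℕ} (M : Matrix (Fin n) (Fin m) ℝ) (ε : Fin n → ℝ)
    (ϱ : Fin m → ℝ) (ustar : Fin m → ℝ)
    (hmin : ∀ u : Fin m → ℝ,
      enormFin (M *ᵥ ustar + ε) + ∑ i, ϱ i * |ustar i|
        ≤ enormFin (M *ᵥ u + ε) + ∑ i, ϱ i * |u i|)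
    (ρ : Fin m → ℝ) (hρ : ρ = fun i => 2 * enormFin (M *ᵥ ustar + ε) * ϱ i) :
    ∀ u : Fin m → ℝ,
      enormFin (M *ᵥ ustar + ε) ^ 2 + ∑ i, ρ i * |ustar i|
        ≤ enormFin (M *ᵥ u + ε) ^ 2 + ∑ i, ρ i * |u i| := by
  intro u
  simp_rw [hρ, mul_assoc, ← Finset.mul_sum, ← mul_assoc]
  exact sq_add_two_mul_le_of_add_le (f := fun v => enormFin (M *ᵥ v + ε))
    (R := fun v => ∑ i, ϱ i * |v i|) (enormFin_nonneg _) hmin u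

/-- If `u*` minimizes `f(u) = ‖Mu + ε‖ + ∑ i, ϱ i * |u i|` and `Mu* + ε ≠ 0`,
then with `ρ = 2‖Mu* + ε‖ · ϱ` the point `u*` also minimizes
`g(u) = ‖Mu + ε‖² + ∑ i, ρ i * |u i|`. -/
theorem stmt3 {n m : ℕ} (M : Matrix (Fin n) (Fin m) ℝ) (ε : Fin n → ℝ)
    (ϱ : Fin m → ℝ) (hϱ : ∀ i, 0 ≤ ϱ i) (ustar : Fin m → ℝ)
    (hmin : ∀ u : Fin m → ℝ,
      enormFin (M *ᵥ ustar + ε) + ∑ i, ϱ i * |ustar i|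
        ≤ enormFin (M *ᵥ u + ε) + ∑ i, ϱ i * |u i|)
    (hMu : M *ᵥ ustar + ε ≠ 0)
    (ρ : Fin m → ℝ) (hρ : ρ = fun i => 2 * enormFin (M *ᵥ ustar + ε) * ϱ i) :
    ∀ u : Fin m → ℝ,
      enormFin (M *ᵥ ustar + ε) ^ 2 + ∑ i, ρ i * |ustar i|
        ≤ enormFin (M *ᵥ u + ε) ^ 2 + ∑ i, ρ i * |u i| :=
  stmt3_general M ε ϱ ustar hmin ρ hρ
end

section
/- Let M ∈ ℝ^{n×m}, ε ∈ ℝ^n, and ϱ > 0. Suppose u* ∈ ℝ^m minimizes the worst-case objective F(u) = max_{‖Δ‖_F ≤ ϱ} ‖(M + Δ)u + ε‖² over ℝ^m, and that u* ≠ 0 and Mu* + ε ≠ 0. Set ρ = ϱ‖Mu* + ε‖/‖u*‖. Then u* is the unique minimizer of the regularized objective Φ(u) = ‖Mu + ε‖² + ρ‖u‖² over ℝ^m; that is, the min-max robust problem and the ridge-regularized problem share the same optimal point. -/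
/-! The supremum over the Frobenius ball is attained by the rank-one perturbation aligned with
`u` and the residual `Mu + ε`, so `F(u) = (‖Mu + ε‖ + ϱ‖u‖)²` whenever both are nonzero, and
`F(u) ≤ (‖Mu + ε‖ + ϱ‖u‖)²` always. Hence `u*` minimizes `‖Mu + ε‖ + ϱ‖u‖`. With the weight
`ρ = ϱ‖Mu* + ε‖/‖u*‖`, the tangent lines of `Φ` at `u*` add up to a multiple of this function,
so `u*` minimizes `Φ`; as `ρ > 0`, `Φ` is strictly convex and the minimizer is unique. -/

open Matrix BigOperators

/-- Euclidean norm of a vector in `ℝ^a`. -/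
noncomputable def euclNorm {a : ℕ} (x : Fin a → ℝ) : ℝ := Real.sqrt (∑ i, x i ^ 2)

/-- Frobenius norm of a matrix. -/
noncomputable def frob {a b : ℕ} (M : Matrix (Fin a) (Fin b) ℝ) : ℝ :=
  Real.sqrt (∑ i, ∑ j, M i j ^ 2)

/-- Worst-case objective `F(u) = max_{‖Δ‖_F ≤ ϱ} ‖(M + Δ)u + ε‖²`. -/
noncomputable def worstGen {n m : ℕ} (M : Matrix (Fin n) (Fin m) ℝ) (ε : Fin n → ℝ)
    (ϱ : ℝ) (u : Fin m → ℝ) : ℝ :=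
  sSup {v : ℝ | ∃ Δ : Matrix (Fin n) (Fin m) ℝ, frob Δ ≤ ϱ ∧
    v = euclNorm ((M + Δ) *ᵥ u + ε) ^ 2}

open WithLp

attribute [local instance] Matrix.frobeniusNormedAddCommGroup Matrix.frobeniusNormedSpace

lemma euclNorm_eq_norm {a : ℕ} (x : Fin a → ℝ) : euclNorm x = ‖toLp 2 x‖ := by
  simp [euclNorm, EuclideanSpace.norm_eq]

lemma euclNorm_nonneg {a : ℕ} (x : Fin a → ℝ) : 0 ≤ euclNorm x := Real.sqrt_nonneg _

lemma euclNorm_pos {a : ℕ} {x : Fin a → ℝ} (hx : x ≠ 0) : 0 < euclNorm x := by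
  rw [euclNorm_eq_norm, norm_pos_iff]
  simpa using hx

lemma frob_eq_norm {a b : ℕ} (A : Matrix (Fin a) (Fin b) ℝ) : frob A = ‖A‖ := by
  simp [frob, Matrix.frobenius_norm_def, Real.sqrt_eq_rpow]

namespace Matrix

variable {𝕜 l m : Type*} [RCLike 𝕜] [Fintype l] [Fintype m]

lemma frobenius_norm_mulVec_le (A : Matrix l m 𝕜) (v : m → 𝕜) :
    ‖toLp 2 (A *ᵥ v)‖ ≤ ‖A‖ * ‖toLp 2 v‖ := by
  simpa [← replicateCol_mulVec] using frobenius_norm_mul A (replicateCol Unit v)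

lemma frobenius_norm_vecMulVec_le (v : l → 𝕜) (w : m → 𝕜) :
    ‖vecMulVec v w‖ ≤ ‖toLp 2 v‖ * ‖toLp 2 w‖ := by
  simpa [← vecMulVec_eq Unit] using
    frobenius_norm_mul (replicateCol Unit v) (replicateRow Unit w)

end Matrix

section WorstCase

variable {n m : ℕ} (M : Matrix (Fin n) (Fin m) ℝ) (ε : Fin n → ℝ) {ϱ : ℝ} (u : Fin m → ℝ)

lemma euclNorm_perturbed_le {Δ : Matrix (Fin n) (Fin m) ℝ} (hΔ : frob Δ ≤ ϱ) :
    euclNorm ((M + Δ) *ᵥ u + ε) ≤ euclNorm (M *ᵥ u + ε) + ϱ * euclNorm u := by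
  rw [frob_eq_norm] at hΔ
  simp only [euclNorm_eq_norm]
  calc ‖toLp 2 ((M + Δ) *ᵥ u + ε)‖ = ‖toLp 2 (M *ᵥ u + ε) + toLp 2 (Δ *ᵥ u)‖ := by
        rw [add_mulVec, ← toLp_add, add_right_comm]
    _ ≤ ‖toLp 2 (M *ᵥ u + ε)‖ + ‖Δ‖ * ‖toLp 2 u‖ :=
        norm_add_le_of_le le_rfl (Matrix.frobenius_norm_mulVec_le Δ u)
    _ ≤ ‖toLp 2 (M *ᵥ u + ε)‖ + ϱ * ‖toLp 2 u‖ := by gcongr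

lemma exists_euclNorm_perturbed_eq (hϱ : 0 ≤ ϱ) (hu : u ≠ 0) (hr : M *ᵥ u + ε ≠ 0) :
    ∃ Δ, frob Δ ≤ ϱ ∧ euclNorm ((M + Δ) *ᵥ u + ε) = euclNorm (M *ᵥ u + ε) + ϱ * euclNorm u := by
  set r := M *ᵥ u + ε
  have ha : 0 < ‖toLp 2 u‖ := by simpa using hu
  have hb : 0 < ‖toLp 2 r‖ := by simpa using hr
  set c := ϱ / (‖toLp 2 r‖ * ‖toLp 2 u‖)
  have hc : 0 ≤ c := by positivity
  refine ⟨c • vecMulVec r u, ?_, ?_⟩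
  · rw [frob_eq_norm, norm_smul, Real.norm_of_nonneg hc]
    calc c * ‖vecMulVec r u‖ ≤ c * (‖toLp 2 r‖ * ‖toLp 2 u‖) := by
          gcongr; exact Matrix.frobenius_norm_vecMulVec_le r u
      _ = ϱ := by simp only [c]; field_simp
  · have hdot : u ⬝ᵥ u = ‖toLp 2 u‖ ^ 2 := by
      rw [EuclideanSpace.real_norm_sq_eq (toLp 2 u)]; simp [dotProduct, sq]
    have hres : (M + c • vecMulVec r u) *ᵥ u + ε = (1 + ϱ * ‖toLp 2 u‖ / ‖toLp 2 r‖) • r := by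
      rw [add_mulVec, smul_mulVec, vecMulVec_mulVec, hdot, add_right_comm, op_smul_eq_smul, smul_smul, add_smul, one_smul]
      congr 2
      simp only [c]
      field_simp
    rw [hres, euclNorm_eq_norm, euclNorm_eq_norm, euclNorm_eq_norm, toLp_smul, norm_smul,
      Real.norm_of_nonneg (by positivity)]
    field_simp

lemma worstGen_le (hϱ : 0 ≤ ϱ) :
    worstGen M ε ϱ u ≤ (euclNorm (M *ᵥ u + ε) + ϱ * euclNorm u) ^ 2 :=
  csSup_le ⟨_, 0, by simpa [frob] using hϱ, rfl⟩ <| by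
    rintro _ ⟨Δ, hΔ, rfl⟩
    exact pow_le_pow_left₀ (euclNorm_nonneg _) (euclNorm_perturbed_le M ε u hΔ) 2

lemma worstGen_eq (hϱ : 0 ≤ ϱ) (hu : u ≠ 0) (hr : M *ᵥ u + ε ≠ 0) :
    worstGen M ε ϱ u = (euclNorm (M *ᵥ u + ε) + ϱ * euclNorm u) ^ 2 := by
  obtain ⟨Δ, hΔ, hworst⟩ := exists_euclNorm_perturbed_eq M ε u hϱ hu hr
  refine le_antisymm (worstGen_le M ε u hϱ) (le_csSup ?_ ⟨Δ, hΔ, by rw [hworst]⟩)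
  refine ⟨(euclNorm (M *ᵥ u + ε) + ϱ * euclNorm u) ^ 2, ?_⟩
  rintro _ ⟨Δ', hΔ', rfl⟩
  exact pow_le_pow_left₀ (euclNorm_nonneg _) (euclNorm_perturbed_le M ε u hΔ') 2

end WorstCase

/-- The ridge weight `ρ` makes the tangent lines of `b ↦ b²` at `b₀` and of `a ↦ ρ a²` at `a₀`
add up to `2 b₀ (b + ϱ a)`. -/
lemma sq_add_mul_sq_le_of_add_mul_le {a₀ b₀ a b ϱ ρ : ℝ} (hρ : 0 ≤ ρ) (hb₀ : 0 ≤ b₀)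
    (hρa₀ : ρ * a₀ = ϱ * b₀) (h : b₀ + ϱ * a₀ ≤ b + ϱ * a) :
    b₀ ^ 2 + ρ * a₀ ^ 2 ≤ b ^ 2 + ρ * a ^ 2 := by
  have htangent : (ρ * a₀ - ϱ * b₀) * (a - a₀) = 0 := by rw [hρa₀, sub_self, zero_mul]
  nlinarith [sq_nonneg (b - b₀), mul_nonneg hρ (sq_nonneg (a - a₀)), mul_nonneg hb₀ (sub_nonneg.2 h)]

lemma strictConvexOn_norm_sq_add_mul_norm_sq {E F : Type*} [NormedAddCommGroup E]
    [InnerProductSpace ℝ E] [NormedAddCommGroup F] [NormedSpace ℝ F] (f : E →ᵃ[ℝ] F) {ρ : ℝ}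
    (hρ : 0 < ρ) : StrictConvexOn ℝ Set.univ fun x => ‖f x‖ ^ 2 + ρ * ‖x‖ ^ 2 := by
  refine StrongConvexOn.strictConvexOn (m := 2 * ρ) ?_ (by positivity)
  have hsub : (fun x => ‖f x‖ ^ 2 + ρ * ‖x‖ ^ 2 - 2 * ρ / 2 * ‖x‖ ^ 2) = (norm ^ 2) ∘ f := by
    ext x
    simp only [Function.comp_apply, Pi.pow_apply]
    ring
  rw [strongConvexOn_iff_convex, hsub]
  simpa only [Set.preimage_univ] using
    ((convexOn_norm convex_univ).pow (fun _ _ => norm_nonneg _) 2).comp_affineMap f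

lemma euclNorm_ridge_lt_of_forall_le {n m : ℕ} (M : Matrix (Fin n) (Fin m) ℝ) (ε : Fin n → ℝ)
    {ρ : ℝ} (hρ : 0 < ρ) {u₀ u : Fin m → ℝ}
    (hmin : ∀ v, euclNorm (M *ᵥ u₀ + ε) ^ 2 + ρ * euclNorm u₀ ^ 2
      ≤ euclNorm (M *ᵥ v + ε) ^ 2 + ρ * euclNorm v ^ 2) (hne : u ≠ u₀) :
    euclNorm (M *ᵥ u₀ + ε) ^ 2 + ρ * euclNorm u₀ ^ 2
      < euclNorm (M *ᵥ u + ε) ^ 2 + ρ * euclNorm u ^ 2 := by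
  let f : EuclideanSpace ℝ (Fin m) →ᵃ[ℝ] EuclideanSpace ℝ (Fin n) :=
    (toEuclideanLin M).toAffineMap + AffineMap.const ℝ _ (toLp 2 ε)
  have hΦ : ∀ v, euclNorm (M *ᵥ v + ε) ^ 2 + ρ * euclNorm v ^ 2
      = ‖f (toLp 2 v)‖ ^ 2 + ρ * ‖toLp 2 v‖ ^ 2 := by
    intro v
    simp [f, euclNorm_eq_norm]
  have hmin_euclid (x : EuclideanSpace ℝ (Fin m)) :
      ‖f (toLp 2 u₀)‖ ^ 2 + ρ * ‖toLp 2 u₀‖ ^ 2 ≤ ‖f x‖ ^ 2 + ρ * ‖x‖ ^ 2 := by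
    simpa only [hΦ] using hmin (ofLp x)
  refine lt_of_not_ge fun hle => hne (toLp_injective 2 ?_)
  rw [hΦ, hΦ] at hle
  exact (strictConvexOn_norm_sq_add_mul_norm_sq f hρ).eq_of_isMinOn
    (fun x _ => hle.trans (hmin_euclid x)) (fun x _ => hmin_euclid x) trivial trivial

/-- Theorem 1, part 1: if `u*` minimizes the worst-case objective over the generalized
uncertainty set, with `u* ≠ 0` and `Mu* + ε ≠ 0`, then with `ρ = ϱ‖Mu* + ε‖/‖u*‖`
it is the unique minimizer of the ridge-regularized objective
`Φ(u) = ‖Mu + ε‖² + ρ‖u‖²`. -/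
theorem stmt4 {n m : ℕ} (M : Matrix (Fin n) (Fin m) ℝ) (ε : Fin n → ℝ)
    (ϱ : ℝ) (hϱ : 0 < ϱ) (ustar : Fin m → ℝ)
    (hmin : ∀ u : Fin m → ℝ, worstGen M ε ϱ ustar ≤ worstGen M ε ϱ u)
    (hu : ustar ≠ 0) (hMu : M *ᵥ ustar + ε ≠ 0)
    (ρ : ℝ) (hρ : ρ = ϱ * euclNorm (M *ᵥ ustar + ε) / euclNorm ustar) :
    ∀ u : Fin m → ℝ, u ≠ ustar →
      euclNorm (M *ᵥ ustar + ε) ^ 2 + ρ * euclNorm ustar ^ 2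
        < euclNorm (M *ᵥ u + ε) ^ 2 + ρ * euclNorm u ^ 2 := by
  have ha : 0 < euclNorm ustar := euclNorm_pos hu
  have hb : 0 < euclNorm (M *ᵥ ustar + ε) := euclNorm_pos hMu
  have hρpos : 0 < ρ := by rw [hρ]; positivity
  have hρa : ρ * euclNorm ustar = ϱ * euclNorm (M *ᵥ ustar + ε) := by rw [hρ]; field_simp
  have hrobust : ∀ u, euclNorm (M *ᵥ ustar + ε) + ϱ * euclNorm ustar
      ≤ euclNorm (M *ᵥ u + ε) + ϱ * euclNorm u := fun u =>
    le_of_pow_le_pow_left₀ two_ne_zero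
      (add_nonneg (euclNorm_nonneg _) (mul_nonneg hϱ.le (euclNorm_nonneg _))) <|
      (worstGen_eq M ε ustar hϱ.le hu hMu).symm.le.trans <| (hmin u).trans (worstGen_le M ε u hϱ.le)
  intro u hne
  exact euclNorm_ridge_lt_of_forall_le M ε hρpos
    (fun v => sq_add_mul_sq_le_of_add_mul_le hρpos.le hb.le hρa (hrobust v)) hne
end

section
/- Let M ∈ ℝ^{n×m}, ε ∈ ℝ^n, and ϱ ∈ ℝ^m with nonnegative entries. Suppose u* ∈ ℝ^m minimizes the worst-case objective F(u) = max_{Δ : ‖Δ_i‖ ≤ ϱ_i ∀i} ‖(M + Δ)u + ε‖² over ℝ^m, and that Mu* + ε ≠ 0. Set ρ = 2‖Mu* + ε‖·ϱ ∈ ℝ^m. Then u* also minimizes the regularized objective Φ(u) = ‖Mu + ε‖² + Σ_{i=1}^m ρ_i|u_i| over ℝ^m; that is, the min-max robust problem and the ℓ1-regularized (lasso-type) problem share the same optimal point. -/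
open Matrix BigOperators

/-- Euclidean norm of a vector in `ℝ^a`. -/
noncomputable def enorm {a : ℕ} (x : Fin a → ℝ) : ℝ := Real.sqrt (∑ i, x i ^ 2)

/-- Euclidean norm of the `i`-th column of a matrix. -/
noncomputable def colnorm {a b : ℕ} (M : Matrix (Fin a) (Fin b) ℝ) (i : Fin b) : ℝ :=
  Real.sqrt (∑ j, M j i ^ 2)

/-- Worst-case objective `F(u) = max_{Δ : ‖Δ_i‖ ≤ ϱ_i ∀ i} ‖(M + Δ)u + ε‖²`. -/
noncomputable def worstCol {n m : ℕ} (M : Matrix (Fin n) (Fin m) ℝ) (ε : Fin n → ℝ)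
    (ϱ : Fin m → ℝ) (u : Fin m → ℝ) : ℝ :=
  sSup {v : ℝ | ∃ Δ : Matrix (Fin n) (Fin m) ℝ, (∀ i, colnorm Δ i ≤ ϱ i) ∧
    v = _root_.enorm ((M + Δ) *ᵥ u + ε) ^ 2}

/-!
Splitting `(M + Δ)u + ε = (Mu + ε) + Δu`, the triangle inequality bounds the perturbed residual by
`‖Mu + ε‖ + ∑ ϱᵢ|uᵢ|`, and when `Mu + ε ≠ 0` this is attained by the rank-one perturbation whose
`i`-th column is `ϱᵢ sign(uᵢ)` times the unit residual direction. Hence `F(u) = (‖Mu + ε‖ + ∑ ϱᵢ|uᵢ|)²`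
at `u*` and `F(u) ≤ (‖Mu + ε‖ + ∑ ϱᵢ|uᵢ|)²` everywhere, so `u*` minimizes `‖Mu + ε‖ + ∑ ϱᵢ|uᵢ|`.
The tangent line of `t ↦ t²` at `‖Mu* + ε‖` turns this into minimality for `Φ`.
-/

-- The tangent-line inequality `x² + 2x(z - x) ≤ z²`, shifted by `2xy`.
lemma sq_add_two_mul_le_of_add_le_s5 {x y z w : ℝ} (hx : 0 ≤ x) (h : x + y ≤ z + w) :
    x ^ 2 + 2 * x * y ≤ z ^ 2 + 2 * x * w := by
  nlinarith [sq_nonneg (z - x)]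

section

variable {a b : ℕ}

lemma enorm_eq_norm_toLp (x : Fin a → ℝ) : _root_.enorm x = ‖WithLp.toLp 2 x‖ := by
  simp [_root_.enorm, EuclideanSpace.norm_eq, sq_abs]

lemma enorm_nonneg (x : Fin a → ℝ) : 0 ≤ _root_.enorm x := Real.sqrt_nonneg _

lemma colnorm_eq_norm_toLp (Δ : Matrix (Fin a) (Fin b) ℝ) (i : Fin b) :
    colnorm Δ i = ‖WithLp.toLp 2 (Δᵀ i)‖ :=
  enorm_eq_norm_toLp _

lemma norm_toLp_mulVec_le (Δ : Matrix (Fin a) (Fin b) ℝ) (u : Fin b → ℝ) :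
    ‖WithLp.toLp 2 (Δ *ᵥ u)‖ ≤ ∑ i, colnorm Δ i * |u i| := by
  have hcols : WithLp.toLp 2 (Δ *ᵥ u) = ∑ i, u i • WithLp.toLp 2 (Δᵀ i) := by
    simp only [mulVec_eq_sum, op_smul_eq_smul, WithLp.toLp_sum, WithLp.toLp_smul]
  rw [hcols]
  refine (norm_sum_le _ _).trans_eq (Finset.sum_congr rfl fun i _ => ?_)
  rw [norm_smul, Real.norm_eq_abs, colnorm_eq_norm_toLp, mul_comm]

lemma colnorm_vecMulVec (w : Fin a → ℝ) (c : Fin b → ℝ) (i : Fin b) :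
    colnorm (vecMulVec w c) i = |c i| * _root_.enorm w := by
  have hcol : (vecMulVec w c)ᵀ i = c i • w := by
    ext j; simp [vecMulVec_apply, mul_comm]
  rw [colnorm_eq_norm_toLp, hcol, WithLp.toLp_smul, norm_smul, Real.norm_eq_abs,
    enorm_eq_norm_toLp]

lemma abs_sign_le_one (x : ℝ) : |(SignType.sign x : ℝ)| ≤ 1 := by
  rcases lt_trichotomy x 0 with h | h | h <;> simp [h]

lemma sum_mul_abs_nonneg {ϱ : Fin b → ℝ} (hϱ : ∀ i, 0 ≤ ϱ i) (u : Fin b → ℝ) :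
    0 ≤ ∑ i, ϱ i * |u i| :=
  Finset.sum_nonneg fun i _ => mul_nonneg (hϱ i) (abs_nonneg _)

variable {n m : ℕ} (M : Matrix (Fin n) (Fin m) ℝ) (ε : Fin n → ℝ) (ϱ : Fin m → ℝ)

lemma enorm_perturbed_residual_le {Δ : Matrix (Fin n) (Fin m) ℝ} (hΔ : ∀ i, colnorm Δ i ≤ ϱ i)
    (u : Fin m → ℝ) :
    _root_.enorm ((M + Δ) *ᵥ u + ε) ≤ _root_.enorm (M *ᵥ u + ε) + ∑ i, ϱ i * |u i| := by
  rw [add_mulVec, add_right_comm, enorm_eq_norm_toLp, enorm_eq_norm_toLp, WithLp.toLp_add]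
  grw [norm_add_le, norm_toLp_mulVec_le]
  gcongr with i
  exact hΔ i

lemma worstCol_le (u : Fin m → ℝ) :
    worstCol M ε ϱ u ≤ (_root_.enorm (M *ᵥ u + ε) + ∑ i, ϱ i * |u i|) ^ 2 := by
  refine Real.sSup_le ?_ (sq_nonneg _)
  rintro _ ⟨Δ, hΔ, rfl⟩
  exact pow_le_pow_left₀ (enorm_nonneg _) (enorm_perturbed_residual_le M ε ϱ hΔ u) 2

lemma le_worstCol (hϱ : ∀ i, 0 ≤ ϱ i) {u : Fin m → ℝ} (hu : M *ᵥ u + ε ≠ 0) :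
    (_root_.enorm (M *ᵥ u + ε) + ∑ i, ϱ i * |u i|) ^ 2 ≤ worstCol M ε ϱ u := by
  set v := M *ᵥ u + ε
  set w := (_root_.enorm v)⁻¹ • v
  set c : Fin m → ℝ := fun i => ϱ i * SignType.sign (u i)
  have hv0 : WithLp.toLp 2 v ≠ 0 := by simpa using hu
  have hw : _root_.enorm w = 1 := by
    rw [enorm_eq_norm_toLp, WithLp.toLp_smul, enorm_eq_norm_toLp]
    exact norm_smul_inv_norm hv0
  have hv : v = _root_.enorm v • w := by
    rw [smul_inv_smul₀ (by simpa [enorm_eq_norm_toLp] using hv0)]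
  have hc : c ⬝ᵥ u = ∑ i, ϱ i * |u i| := by
    simp only [c, dotProduct, mul_assoc, sign_mul_self]
  have hadm : ∀ i, colnorm (vecMulVec w c) i ≤ ϱ i := fun i => by
    rw [colnorm_vecMulVec, hw, mul_one, abs_mul, abs_of_nonneg (hϱ i)]
    exact mul_le_of_le_one_right (hϱ i) (abs_sign_le_one _)
  have hres : (M + vecMulVec w c) *ᵥ u + ε = (_root_.enorm v + ∑ i, ϱ i * |u i|) • w := by
    rw [add_mulVec, add_right_comm, vecMulVec_mulVec, op_smul_eq_smul, hc, add_smul, ← hv]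
  refine le_csSup ⟨(_root_.enorm v + ∑ i, ϱ i * |u i|) ^ 2, ?_⟩ ⟨vecMulVec w c, hadm, ?_⟩
  · rintro _ ⟨Δ, hΔ, rfl⟩
    exact pow_le_pow_left₀ (enorm_nonneg _) (enorm_perturbed_residual_le M ε ϱ hΔ u) 2
  · rw [hres, enorm_eq_norm_toLp (_ • w), WithLp.toLp_smul, norm_smul, ← enorm_eq_norm_toLp, hw,
      mul_one, Real.norm_of_nonneg]
    exact add_nonneg (enorm_nonneg v) (sum_mul_abs_nonneg hϱ u)

end

/-- Theorem 1, part 2: if `u*` minimizes the worst-case objective over the column-wise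
uncertainty set and `Mu* + ε ≠ 0`, then with `ρ = 2‖Mu* + ε‖ · ϱ` the point `u*`
also minimizes the lasso-type objective `Φ(u) = ‖Mu + ε‖² + ∑ i, ρ i * |u i|`. -/
theorem stmt5 {n m : ℕ} (M : Matrix (Fin n) (Fin m) ℝ) (ε : Fin n → ℝ)
    (ϱ : Fin m → ℝ) (hϱ : ∀ i, 0 ≤ ϱ i) (ustar : Fin m → ℝ)
    (hmin : ∀ u : Fin m → ℝ, worstCol M ε ϱ ustar ≤ worstCol M ε ϱ u)
    (hMu : M *ᵥ ustar + ε ≠ 0)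
    (ρ : Fin m → ℝ) (hρ : ρ = fun i => 2 * _root_.enorm (M *ᵥ ustar + ε) * ϱ i) :
    ∀ u : Fin m → ℝ,
      _root_.enorm (M *ᵥ ustar + ε) ^ 2 + ∑ i, ρ i * |ustar i|
        ≤ _root_.enorm (M *ᵥ u + ε) ^ 2 + ∑ i, ρ i * |u i| := by
  intro u
  have hsq := (le_worstCol M ε ϱ hϱ hMu).trans ((hmin u).trans (worstCol_le M ε ϱ u))
  have hle := (sq_le_sq₀ (add_nonneg (enorm_nonneg _) (sum_mul_abs_nonneg hϱ ustar))
    (add_nonneg (enorm_nonneg _) (sum_mul_abs_nonneg hϱ u))).1 hsq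
  subst hρ
  simpa only [mul_assoc, Finset.mul_sum] using
    sq_add_two_mul_le_of_add_le_s5 (enorm_nonneg _) hle
end

section
/- Consider the interconnection of the plant with the ℓ2-controller. Then for every k ≥ 0, ‖x_{k+1} − x_{ss,k+1}‖_P ≤ c1·‖x_k − x_{ss,k}‖_P + η·c2·‖u_k − u_k*‖ + η·c3·‖H − Ĥ‖·‖u_k‖ + c4·‖d_{x,k+1} − d_{x,k}‖, where c1 = √(1−γ) + 2ηλ‖(I−A)^{-1}B‖·‖ĤᵀQ‖·‖C‖·√(λ_max(P))/√(λ_min(P)), c2 = √(λ_max(P))·‖(I−A)^{-1}B‖·‖2(R + λĤᵀQĤ + ρ_gen I)‖, c3 = 2λ√(λ_max(P))·‖(I−A)^{-1}B‖·‖ĤᵀQ‖, and c4 = √(λ_max(P))·‖(I−A)^{-1}‖. -/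
open Matrix BigOperators

/-- Spectral (ℓ2-operator) norm of a matrix. -/
noncomputable def spec {a b : ℕ} (M : Matrix (Fin a) (Fin b) ℝ) : ℝ :=
  ‖LinearMap.toContinuousLinearMap (Matrix.toEuclideanLin M)‖

/-- Largest eigenvalue of a symmetric matrix (Rayleigh quotient over the unit sphere). -/
noncomputable def eigMax {a : ℕ} (P : Matrix (Fin a) (Fin a) ℝ) : ℝ :=
  sSup {r : ℝ | ∃ x : Fin a → ℝ, ∑ i, x i ^ 2 = 1 ∧ r = x ⬝ᵥ P *ᵥ x}

/-- Smallest eigenvalue of a symmetric matrix (Rayleigh quotient over the unit sphere). -/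
noncomputable def eigMin {a : ℕ} (P : Matrix (Fin a) (Fin a) ℝ) : ℝ :=
  sInf {r : ℝ | ∃ x : Fin a → ℝ, ∑ i, x i ^ 2 = 1 ∧ r = x ⬝ᵥ P *ᵥ x}

/-- The `P`-weighted norm `‖x‖_P = √(xᵀ P x)`. -/
noncomputable def pnorm {a : ℕ} (P : Matrix (Fin a) (Fin a) ℝ) (x : Fin a → ℝ) : ℝ :=
  Real.sqrt (x ⬝ᵥ P *ᵥ x)

/-- The regularized objective `Φ_{ℓ2,k}(v) = vᵀRv + λ(Ĥv + d − r)ᵀQ(Ĥv + d − r) + ρ_gen ‖v‖²`. -/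
noncomputable def Phi2 {m p : ℕ} (R : Matrix (Fin m) (Fin m) ℝ) (Q : Matrix (Fin p) (Fin p) ℝ)
    (lam ρgen : ℝ) (Hhat : Matrix (Fin p) (Fin m) ℝ) (d rk : Fin p → ℝ) (v : Fin m → ℝ) : ℝ :=
  v ⬝ᵥ R *ᵥ v + lam * ((Hhat *ᵥ v + d - rk) ⬝ᵥ Q *ᵥ (Hhat *ᵥ v + d - rk))
    + ρgen * ∑ i, v i ^ 2

/-!
Write `e = x - x_ss`. Since `(I - A) x_ss = B u + d_x`, the state error obeys
`e⁺ = A e - (I - A)⁻¹ B (u⁺ - u) - (I - A)⁻¹ (d_x⁺ - d_x)`, and the Lyapunov equation makes `A` a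
contraction for `‖·‖_P` with rate `√(1 - γ)`. The objective `Φ_{ℓ2}` is quadratic, so its
(half) gradient is affine with linear part `M = R + λĤᵀQĤ + ρ_gen I` and vanishes at the
minimiser `u*`. Writing `y - r = (Ĥu + d - r) + C e + (H - Ĥ) u`, the controller increment is
`u⁺ - u = -2η (M (u - u*) + λ ĤᵀQ (C e + (H - Ĥ) u))`. Bounding every term by spectral norms,
`‖·‖_P ≤ √λ_max(P) ‖·‖` and `‖e‖ ≤ ‖e‖_P / √λ_min(P)` produces the constants `c1, …, c4`.
-/

namespace ClosedLoop

variable {a b : ℕ}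

lemma sum_sq_eq_enorm_sq (v : Fin a → ℝ) : ∑ i, v i ^ 2 = _root_.enorm v ^ 2 :=
  (Real.sq_sqrt (Finset.sum_nonneg fun i _ => sq_nonneg (v i))).symm

lemma enorm_eq_norm_toLp (v : Fin a → ℝ) : _root_.enorm v = ‖WithLp.toLp 2 v‖ := by
  simp [_root_.enorm, EuclideanSpace.norm_eq]

lemma enorm_add_le (v w : Fin a → ℝ) :
    _root_.enorm (v + w) ≤ _root_.enorm v + _root_.enorm w := by
  simpa only [enorm_eq_norm_toLp, WithLp.toLp_add] using norm_add_le _ _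

lemma enorm_smul (t : ℝ) (v : Fin a → ℝ) : _root_.enorm (t • v) = |t| * _root_.enorm v := by
  simp only [enorm_eq_norm_toLp, WithLp.toLp_smul, norm_smul, Real.norm_eq_abs]

lemma enorm_neg (v : Fin a → ℝ) : _root_.enorm (-v) = _root_.enorm v := by
  simpa using enorm_smul (-1) v

lemma spec_nonneg (M : Matrix (Fin a) (Fin b) ℝ) : 0 ≤ spec M := norm_nonneg _

lemma enorm_mulVec_le (M : Matrix (Fin a) (Fin b) ℝ) (v : Fin b → ℝ) :
    _root_.enorm (M *ᵥ v) ≤ spec M * _root_.enorm v := by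
  rw [enorm_eq_norm_toLp, enorm_eq_norm_toLp]
  exact (LinearMap.toContinuousLinearMap (toEuclideanLin M)).le_opNorm (WithLp.toLp 2 v)

lemma isCompact_setOf_sum_sq_eq_one : IsCompact {x : Fin a → ℝ | ∑ i, x i ^ 2 = 1} := by
  convert (isCompact_sphere (0 : EuclideanSpace ℝ (Fin a)) 1).image (PiLp.continuous_ofLp 2 _)
  ext x
  simp only [Set.mem_ofPred_eq, Set.mem_image, mem_sphere_zero_iff_norm, sum_sq_eq_enorm_sq,
    enorm_eq_norm_toLp]
  constructor
  · intro hx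
    exact ⟨_, (pow_eq_one_iff_of_nonneg (norm_nonneg _) two_ne_zero).1 hx, rfl⟩
  · rintro ⟨y, hy, rfl⟩
    simp [hy]

lemma isCompact_rayleigh (P : Matrix (Fin a) (Fin a) ℝ) :
    IsCompact {r : ℝ | ∃ x : Fin a → ℝ, ∑ i, x i ^ 2 = 1 ∧ r = x ⬝ᵥ P *ᵥ x} := by
  convert isCompact_setOf_sum_sq_eq_one.image (f := fun x => x ⬝ᵥ P *ᵥ x)
    (by simp only [dotProduct, mulVec]; fun_prop) using 1
  ext r
  simp [eq_comm]

lemma exists_sum_sq_eq_one_dotProduct_mulVec_eq (P : Matrix (Fin a) (Fin a) ℝ)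
    {z : Fin a → ℝ} (hz : z ≠ 0) :
    ∃ x : Fin a → ℝ, ∑ i, x i ^ 2 = 1 ∧ z ⬝ᵥ P *ᵥ z = (∑ i, z i ^ 2) * (x ⬝ᵥ P *ᵥ x) := by
  have hc : 0 < _root_.enorm z := by
    rw [enorm_eq_norm_toLp]
    exact norm_pos_iff.2 fun h => hz (by simpa using congrArg WithLp.ofLp h)
  refine ⟨(_root_.enorm z)⁻¹ • z, ?_, ?_⟩
  · rw [sum_sq_eq_enorm_sq, enorm_smul, abs_inv, abs_of_pos hc, inv_mul_cancel₀ hc.ne', one_pow]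
  · rw [sum_sq_eq_enorm_sq, mulVec_smul, smul_dotProduct, dotProduct_smul, smul_eq_mul,
      smul_eq_mul]
    field_simp

lemma dotProduct_mulVec_le_eigMax (P : Matrix (Fin a) (Fin a) ℝ) (z : Fin a → ℝ) :
    z ⬝ᵥ P *ᵥ z ≤ eigMax P * ∑ i, z i ^ 2 := by
  rcases eq_or_ne z 0 with rfl | hz
  · simp
  obtain ⟨x, hx, hzx⟩ := exists_sum_sq_eq_one_dotProduct_mulVec_eq P hz
  rw [hzx, mul_comm]
  exact mul_le_mul_of_nonneg_right (le_csSup (isCompact_rayleigh P).bddAbove ⟨x, hx, rfl⟩)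
    (Finset.sum_nonneg fun i _ => sq_nonneg (z i))

lemma eigMin_mul_le_dotProduct_mulVec (P : Matrix (Fin a) (Fin a) ℝ) (z : Fin a → ℝ) :
    eigMin P * ∑ i, z i ^ 2 ≤ z ⬝ᵥ P *ᵥ z := by
  rcases eq_or_ne z 0 with rfl | hz
  · simp
  obtain ⟨x, hx, hzx⟩ := exists_sum_sq_eq_one_dotProduct_mulVec_eq P hz
  rw [hzx, mul_comm (eigMin P)]
  exact mul_le_mul_of_nonneg_left (csInf_le (isCompact_rayleigh P).bddBelow ⟨x, hx, rfl⟩)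
    (Finset.sum_nonneg fun i _ => sq_nonneg (z i))

lemma eigMax_nonneg {P : Matrix (Fin a) (Fin a) ℝ} (hP : P.PosSemidef) : 0 ≤ eigMax P :=
  Real.sSup_nonneg fun _ ⟨x, _, hr⟩ => hr ▸ by simpa using hP.dotProduct_mulVec_nonneg x

lemma eigMin_nonneg {P : Matrix (Fin a) (Fin a) ℝ} (hP : P.PosSemidef) : 0 ≤ eigMin P :=
  Real.sInf_nonneg fun _ ⟨x, _, hr⟩ => hr ▸ by simpa using hP.dotProduct_mulVec_nonneg x

lemma eigMin_pos [NeZero a] {P : Matrix (Fin a) (Fin a) ℝ} (hP : P.PosDef) : 0 < eigMin P := by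
  have hunit : ∑ i, (Pi.single 0 1 : Fin a → ℝ) i ^ 2 = 1 := by simp [Pi.single_apply]
  obtain ⟨x, hx, hmin⟩ := (isCompact_rayleigh P).sInf_mem ⟨_, _, hunit, rfl⟩
  rw [eigMin, hmin]
  exact hP.dotProduct_mulVec_pos fun h => by simp [h] at hx

open scoped MatrixOrder in
lemma exists_eq_transpose_mul_self {P : Matrix (Fin a) (Fin a) ℝ} (hP : P.PosSemidef) :
    ∃ S : Matrix (Fin a) (Fin a) ℝ, P = Sᵀ * S := by
  refine ⟨CFC.sqrt P, ?_⟩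
  have hS : (CFC.sqrt P)ᵀ = CFC.sqrt P := by
    simpa [IsSelfAdjoint, star_eq_conjTranspose] using (CFC.sqrt_nonneg P).isSelfAdjoint
  rw [hS, CFC.sqrt_mul_sqrt_self P hP.nonneg]

lemma pnorm_transpose_mul_self (S : Matrix (Fin a) (Fin a) ℝ) (v : Fin a → ℝ) :
    pnorm (Sᵀ * S) v = _root_.enorm (S *ᵥ v) := by
  rw [pnorm, _root_.enorm, ← mulVec_mulVec, dotProduct_mulVec, vecMul_transpose]
  simp only [dotProduct, pow_two]

lemma pnorm_sub_le {P : Matrix (Fin a) (Fin a) ℝ} (hP : P.PosSemidef) (v w : Fin a → ℝ) :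
    pnorm P (v - w) ≤ pnorm P v + pnorm P w := by
  obtain ⟨S, rfl⟩ := exists_eq_transpose_mul_self hP
  rw [pnorm_transpose_mul_self, pnorm_transpose_mul_self, pnorm_transpose_mul_self, mulVec_sub,
    sub_eq_add_neg, ← enorm_neg (S *ᵥ w)]
  exact enorm_add_le _ _

lemma pnorm_le_sqrt_eigMax_mul (P : Matrix (Fin a) (Fin a) ℝ) (v : Fin a → ℝ) :
    pnorm P v ≤ √(eigMax P) * _root_.enorm v := by
  rw [pnorm, _root_.enorm, ← Real.sqrt_mul' _ (Finset.sum_nonneg fun i _ => sq_nonneg (v i))]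
  exact Real.sqrt_le_sqrt (dotProduct_mulVec_le_eigMax P v)

lemma pnorm_mulVec_le (P : Matrix (Fin a) (Fin a) ℝ) (M : Matrix (Fin a) (Fin b) ℝ)
    (v : Fin b → ℝ) : pnorm P (M *ᵥ v) ≤ √(eigMax P) * (spec M * _root_.enorm v) :=
  (pnorm_le_sqrt_eigMax_mul P _).trans (by gcongr; exact enorm_mulVec_le M v)

lemma enorm_le_pnorm_div_sqrt_eigMin {P : Matrix (Fin a) (Fin a) ℝ} (hP : P.PosDef)
    (v : Fin a → ℝ) : _root_.enorm v ≤ pnorm P v / √(eigMin P) := by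
  -- `v = 0` is split off because for `a = 0` the Rayleigh set is empty and `eigMin P = sInf ∅ = 0`.
  rcases eq_or_ne v 0 with rfl | hv
  · simp [_root_.enorm, pnorm]
  have : NeZero a := ⟨by rintro rfl; exact hv (Subsingleton.elim _ _)⟩
  rw [le_div_iff₀' (Real.sqrt_pos.2 (eigMin_pos hP)), pnorm, _root_.enorm,
    ← Real.sqrt_mul' _ (Finset.sum_nonneg fun i _ => sq_nonneg (v i))]
  exact Real.sqrt_le_sqrt (eigMin_mul_le_dotProduct_mulVec P v)

lemma pnorm_mulVec_le_of_lyapunov {A P Qbar : Matrix (Fin a) (Fin a) ℝ} (hP : P.PosSemidef)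
    (hQbar : Qbar.PosSemidef) (hLyap : Aᵀ * P * A - P + Qbar = 0) (e : Fin a → ℝ) :
    pnorm P (A *ᵥ e) ≤ √(1 - eigMin Qbar / eigMax P) * pnorm P e := by
  have hdecrease : (A *ᵥ e) ⬝ᵥ P *ᵥ (A *ᵥ e) = e ⬝ᵥ P *ᵥ e - e ⬝ᵥ Qbar *ᵥ e := by
    have := congrArg (fun M => e ⬝ᵥ M *ᵥ e) hLyap
    simp only [add_mulVec, sub_mulVec, dotProduct_add, dotProduct_sub, zero_mulVec,
      dotProduct_zero, ← mulVec_mulVec, dotProduct_mulVec e Aᵀ, vecMul_transpose] at this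
    linarith
  have hrate : eigMin Qbar / eigMax P * (e ⬝ᵥ P *ᵥ e) ≤ e ⬝ᵥ Qbar *ᵥ e := by
    rcases (eigMax_nonneg hP).eq_or_lt with hmax | hmax
    · simpa [← hmax] using hQbar.dotProduct_mulVec_nonneg e
    calc eigMin Qbar / eigMax P * (e ⬝ᵥ P *ᵥ e)
        ≤ eigMin Qbar / eigMax P * (eigMax P * ∑ i, e i ^ 2) := by
          gcongr
          · exact div_nonneg (eigMin_nonneg hQbar) hmax.le
          · exact dotProduct_mulVec_le_eigMax P e
      _ = eigMin Qbar * ∑ i, e i ^ 2 := by field_simp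
      _ ≤ e ⬝ᵥ Qbar *ᵥ e := eigMin_mul_le_dotProduct_mulVec Qbar e
  rw [pnorm, pnorm, ← Real.sqrt_mul' _ (by simpa using hP.dotProduct_mulVec_nonneg e)]
  exact Real.sqrt_le_sqrt (by linarith)

lemma pnorm_mulVec_sub_sub_le_of_lyapunov {A P Qbar : Matrix (Fin a) (Fin a) ℝ}
    (hP : P.PosSemidef) (hQbar : Qbar.PosSemidef) (hLyap : Aᵀ * P * A - P + Qbar = 0)
    (G : Matrix (Fin a) (Fin b) ℝ) (K : Matrix (Fin a) (Fin a) ℝ) (e w : Fin a → ℝ)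
    (v : Fin b → ℝ) :
    pnorm P (A *ᵥ e - G *ᵥ v - K *ᵥ w)
      ≤ √(1 - eigMin Qbar / eigMax P) * pnorm P e + √(eigMax P) * (spec G * _root_.enorm v)
        + √(eigMax P) * (spec K * _root_.enorm w) :=
  ((pnorm_sub_le hP _ _).trans (add_le_add_left (pnorm_sub_le hP _ _) _)).trans
    (add_le_add (add_le_add (pnorm_mulVec_le_of_lyapunov hP hQbar hLyap e)
      (pnorm_mulVec_le P G v)) (pnorm_mulVec_le P K w))

lemma isUnit_det_one_sub_of_spectralRadius_lt_one {A : Matrix (Fin a) (Fin a) ℝ}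
    (hA : spectralRadius ℂ (A.map Complex.ofReal) < 1) : IsUnit (1 - A).det := by
  have hres : (1 : ℂ) ∈ resolventSet ℂ (A.map Complex.ofReal) :=
    spectrum.mem_resolventSet_of_spectralRadius_lt (by simpa using hA)
  have hmap : (1 - A).map Complex.ofReal = algebraMap ℂ _ 1 - A.map Complex.ofReal := by
    simp [Matrix.map_sub]
  rw [resolventSet, Set.mem_ofPred_eq, ← hmap, isUnit_iff_isUnit_det,
    show (1 - A).map Complex.ofReal = Complex.ofRealHom.mapMatrix (1 - A) from rfl,
    ← RingHom.map_det, isUnit_iff_ne_zero, map_ne_zero] at hres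
  exact isUnit_iff_ne_zero.2 hres

lemma sub_steadyState_succ {n m : ℕ} {A : Matrix (Fin n) (Fin n) ℝ} (hA : IsUnit (1 - A).det)
    (B : Matrix (Fin n) (Fin m) ℝ) (x : Fin n → ℝ) (u u' : Fin m → ℝ) (dx dx' : Fin n → ℝ) :
    A *ᵥ x + B *ᵥ u + dx - (1 - A)⁻¹ *ᵥ (B *ᵥ u' + dx')
      = A *ᵥ (x - (1 - A)⁻¹ *ᵥ (B *ᵥ u + dx)) - ((1 - A)⁻¹ * B) *ᵥ (u' - u)
        - (1 - A)⁻¹ *ᵥ (dx' - dx) := by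
  obtain ⟨s, hs⟩ : ∃ s, (1 - A)⁻¹ *ᵥ (B *ᵥ u + dx) = s := ⟨_, rfl⟩
  have hsteady : B *ᵥ u + dx = s - A *ᵥ s := by
    have h := congrArg (· *ᵥ (B *ᵥ u + dx)) (mul_nonsing_inv _ hA)
    simp only [← mulVec_mulVec, sub_mulVec, one_mulVec, hs] at h
    exact h.symm
  have hs' : (1 - A)⁻¹ *ᵥ (B *ᵥ u' + dx')
      = s + ((1 - A)⁻¹ * B) *ᵥ (u' - u) + (1 - A)⁻¹ *ᵥ (dx' - dx) := by
    rw [← hs, ← mulVec_mulVec, ← mulVec_add, ← mulVec_add, mulVec_sub]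
    congr 1
    abel
  rw [hs', hs, add_assoc (A *ᵥ x), hsteady, mulVec_sub A x s]
  abel

section Objective

variable {m p : ℕ} (R : Matrix (Fin m) (Fin m) ℝ) (Q : Matrix (Fin p) (Fin p) ℝ) (lam ρgen : ℝ)
  (Hhat : Matrix (Fin p) (Fin m) ℝ)

noncomputable def halfGradPhi2 (d rk : Fin p → ℝ) (w : Fin m → ℝ) : Fin m → ℝ :=
  R *ᵥ w + lam • (Hhatᵀ *ᵥ (Q *ᵥ (Hhat *ᵥ w + d - rk))) + ρgen • w

lemma halfGradPhi2_sub (d rk : Fin p → ℝ) (w w' : Fin m → ℝ) :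
    halfGradPhi2 R Q lam ρgen Hhat d rk w - halfGradPhi2 R Q lam ρgen Hhat d rk w'
      = (R + lam • (Hhatᵀ * Q * Hhat) + ρgen • 1) *ᵥ (w - w') := by
  simp only [halfGradPhi2, add_mulVec, smul_mulVec, one_mulVec, ← mulVec_mulVec, mulVec_sub,
    mulVec_add]
  module

variable {R Q} in
lemma phi2_add_smul (hR : R.IsSymm) (hQ : Q.IsSymm) (d rk : Fin p → ℝ) (w z : Fin m → ℝ)
    (t : ℝ) :
    Phi2 R Q lam ρgen Hhat d rk (w + t • z) = Phi2 R Q lam ρgen Hhat d rk w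
      + t ^ 2 * Phi2 R Q lam ρgen Hhat 0 0 z
      + 2 * t * (z ⬝ᵥ halfGradPhi2 R Q lam ρgen Hhat d rk w) := by
  have hsq : ∀ v : Fin m → ℝ, ∑ i, v i ^ 2 = v ⬝ᵥ v := fun v => by simp [dotProduct, pow_two]
  have hsymm : ∀ {k} {M : Matrix (Fin k) (Fin k) ℝ}, M.IsSymm →
      ∀ v v', v ⬝ᵥ M *ᵥ v' = v' ⬝ᵥ M *ᵥ v := fun hM v v' => by
    rw [dotProduct_mulVec, ← mulVec_transpose, hM.eq, dotProduct_comm]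
  have hres : Hhat *ᵥ (w + t • z) + d - rk = (Hhat *ᵥ w + d - rk) + t • Hhat *ᵥ z := by
    rw [mulVec_add, mulVec_smul]; abel
  have hadj : z ⬝ᵥ Hhatᵀ *ᵥ (Q *ᵥ (Hhat *ᵥ w + d - rk))
      = Hhat *ᵥ z ⬝ᵥ Q *ᵥ (Hhat *ᵥ w + d - rk) := by
    rw [dotProduct_mulVec, vecMul_transpose]
  rw [Phi2, Phi2, Phi2, hres]
  simp only [halfGradPhi2, hsq, add_zero, sub_zero, mulVec_add, mulVec_smul,
    dotProduct_add, add_dotProduct, dotProduct_smul, smul_dotProduct, smul_eq_mul, hadj,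
    hsymm hR w z, hsymm hQ (Hhat *ᵥ w + d - rk) (Hhat *ᵥ z), dotProduct_comm w z]
  ring

variable {R Q} in
lemma halfGradPhi2_eq_zero_of_forall_le (hR : R.IsSymm) (hQ : Q.IsSymm) (d rk : Fin p → ℝ)
    {w : Fin m → ℝ} (hmin : ∀ v, Phi2 R Q lam ρgen Hhat d rk w ≤ Phi2 R Q lam ρgen Hhat d rk v) :
    halfGradPhi2 R Q lam ρgen Hhat d rk w = 0 := by
  -- `t ↦ Φ(w + t g) - Φ(w)` is a nonnegative quadratic vanishing at `0`, so its discriminant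
  -- `(2 g ⬝ᵥ g)²` is `≤ 0`.
  set g := halfGradPhi2 R Q lam ρgen Hhat d rk w
  have hquad : ∀ t : ℝ, 0 ≤ Phi2 R Q lam ρgen Hhat 0 0 g * (t * t) + 2 * (g ⬝ᵥ g) * t + 0 := by
    intro t
    have := hmin (w + t • g)
    rw [phi2_add_smul lam ρgen Hhat hR hQ] at this
    nlinarith
  have hdisc := discrim_le_zero hquad
  rw [discrim, mul_zero, sub_zero] at hdisc
  exact dotProduct_self_eq_zero.1 (by nlinarith)

variable {n : ℕ}

lemma controlDirection_eq (B : Matrix (Fin n) (Fin m) ℝ) (C : Matrix (Fin p) (Fin n) ℝ)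
    (G : Matrix (Fin n) (Fin n) ℝ) (x dx : Fin n → ℝ) (dy rk : Fin p → ℝ) {u us : Fin m → ℝ}
    (hus : halfGradPhi2 R Q lam ρgen Hhat (C *ᵥ (G *ᵥ dx) + dy) rk us = 0) :
    R *ᵥ u + lam • (Hhatᵀ *ᵥ (Q *ᵥ (C *ᵥ x + dy - rk))) + ρgen • u
      = (R + lam • (Hhatᵀ * Q * Hhat) + ρgen • 1) *ᵥ (u - us)
        + lam • ((Hhatᵀ * Q) *ᵥ (C *ᵥ (x - G *ᵥ (B *ᵥ u + dx)) + (C * G * B - Hhat) *ᵥ u)) := by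
  rw [← halfGradPhi2_sub, hus, sub_zero, halfGradPhi2]
  simp only [mulVec_add, mulVec_sub, sub_mulVec, ← mulVec_mulVec, smul_add, smul_sub]
  abel

lemma enorm_controlStep_le {η : ℝ} (hη : 0 ≤ η) (hlam : 0 ≤ lam) {P : Matrix (Fin n) (Fin n) ℝ}
    (hP : P.PosDef) (B : Matrix (Fin n) (Fin m) ℝ) (C : Matrix (Fin p) (Fin n) ℝ)
    (G : Matrix (Fin n) (Fin n) ℝ) (x dx : Fin n → ℝ) (dy rk : Fin p → ℝ) {u us : Fin m → ℝ}
    (hus : halfGradPhi2 R Q lam ρgen Hhat (C *ᵥ (G *ᵥ dx) + dy) rk us = 0) :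
    _root_.enorm ((2 * η) • (R *ᵥ u + lam • (Hhatᵀ *ᵥ (Q *ᵥ (C *ᵥ x + dy - rk))) + ρgen • u))
      ≤ η * (spec ((2 : ℝ) • (R + lam • (Hhatᵀ * Q * Hhat) + ρgen • 1)) * _root_.enorm (u - us)
        + 2 * lam * (spec (Hhatᵀ * Q) * (spec C * (pnorm P (x - G *ᵥ (B *ᵥ u + dx)) / √(eigMin P))
          + spec (C * G * B - Hhat) * _root_.enorm u))) := by
  have hscale : ∀ (w : Fin m → ℝ) (z : Fin m → ℝ),
      (2 * η) • ((R + lam • (Hhatᵀ * Q * Hhat) + ρgen • 1) *ᵥ w + lam • z)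
        = η • (((2 : ℝ) • (R + lam • (Hhatᵀ * Q * Hhat) + ρgen • 1)) *ᵥ w + (2 * lam) • z) := by
    intro w z
    rw [smul_mulVec]
    module
  rw [controlDirection_eq R Q lam ρgen Hhat B C G x dx dy rk hus, hscale, enorm_smul,
    abs_of_nonneg hη]
  gcongr
  refine (enorm_add_le _ _).trans (add_le_add (enorm_mulVec_le _ _) ?_)
  rw [enorm_smul, abs_of_nonneg (by positivity)]
  gcongr
  refine (enorm_mulVec_le _ _).trans (mul_le_mul_of_nonneg_left ?_ (spec_nonneg _))
  refine (enorm_add_le _ _).trans (add_le_add ?_ (enorm_mulVec_le _ _))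
  exact (enorm_mulVec_le _ _).trans
    (mul_le_mul_of_nonneg_left (enorm_le_pnorm_div_sqrt_eigMin hP _) (spec_nonneg _))

end Objective

end ClosedLoop

open ClosedLoop

theorem stmt9_general {n m p : ℕ}
    (A : Matrix (Fin n) (Fin n) ℝ) (B : Matrix (Fin n) (Fin m) ℝ) (C : Matrix (Fin p) (Fin n) ℝ)
    (hA : spectralRadius ℂ (A.map Complex.ofReal) < 1)
    (Qbar P : Matrix (Fin n) (Fin n) ℝ) (hQbar : Qbar.PosDef) (hP : P.PosDef)
    (hLyap : Aᵀ * P * A - P + Qbar = 0)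
    (R : Matrix (Fin m) (Fin m) ℝ) (Q : Matrix (Fin p) (Fin p) ℝ)
    (hR : R.PosSemidef) (hQ : Q.PosSemidef)
    (lam : ℝ) (hlam : 0 ≤ lam) (Hhat : Matrix (Fin p) (Fin m) ℝ)
    (r : ℕ → Fin p → ℝ) (η : ℝ) (hη : 0 < η) (ρgen : ℝ)
    (dx : ℕ → Fin n → ℝ) (dy : ℕ → Fin p → ℝ)
    (x : ℕ → Fin n → ℝ) (u : ℕ → Fin m → ℝ) (y : ℕ → Fin p → ℝ)
    (hdyn : ∀ k, x (k + 1) = A *ᵥ x k + B *ᵥ u k + dx k)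
    (hout : ∀ k, y k = C *ᵥ x k + dy k)
    (hctrl : ∀ k, u (k + 1) =
      u k - (2 * η) • (R *ᵥ u k + lam • (Hhatᵀ *ᵥ (Q *ᵥ (y k - r k))) + ρgen • u k))
    (ustar : ℕ → Fin m → ℝ)
    (hustar : ∀ k, ∀ v : Fin m → ℝ, v ≠ ustar k →
      Phi2 R Q lam ρgen Hhat (C *ᵥ ((1 - A)⁻¹ *ᵥ dx k) + dy k) (r k) (ustar k)
        < Phi2 R Q lam ρgen Hhat (C *ᵥ ((1 - A)⁻¹ *ᵥ dx k) + dy k) (r k) v)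
    (H : Matrix (Fin p) (Fin m) ℝ) (hH : H = C * (1 - A)⁻¹ * B)
    (xss : ℕ → Fin n → ℝ) (hxss : ∀ k, xss k = (1 - A)⁻¹ *ᵥ (B *ᵥ u k + dx k))
    (γ c1 c2 c3 c4 : ℝ)
    (hγ : γ = eigMin Qbar / eigMax P)
    (hc1 : c1 = Real.sqrt (1 - γ) + 2 * η * lam * spec ((1 - A)⁻¹ * B) * spec (Hhatᵀ * Q)
      * spec C * Real.sqrt (eigMax P) / Real.sqrt (eigMin P))
    (hc2 : c2 = Real.sqrt (eigMax P) * spec ((1 - A)⁻¹ * B)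
      * spec ((2 : ℝ) • (R + lam • (Hhatᵀ * Q * Hhat) + ρgen • (1 : Matrix (Fin m) (Fin m) ℝ))))
    (hc3 : c3 = 2 * lam * Real.sqrt (eigMax P) * spec ((1 - A)⁻¹ * B) * spec (Hhatᵀ * Q))
    (hc4 : c4 = Real.sqrt (eigMax P) * spec ((1 - A)⁻¹)) :
    ∀ k : ℕ,
      pnorm P (x (k + 1) - xss (k + 1))
        ≤ c1 * pnorm P (x k - xss k) + η * c2 * _root_.enorm (u k - ustar k)
          + η * c3 * spec (H - Hhat) * _root_.enorm (u k)
          + c4 * _root_.enorm (dx (k + 1) - dx k) := by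
  intro k
  have hgrad : halfGradPhi2 R Q lam ρgen Hhat (C *ᵥ ((1 - A)⁻¹ *ᵥ dx k) + dy k) (r k)
      (ustar k) = 0 :=
    halfGradPhi2_eq_zero_of_forall_le lam ρgen Hhat (isHermitian_iff_isSymm.1 hR.isHermitian)
      (isHermitian_iff_isSymm.1 hQ.isHermitian) _ _ fun v =>
        (eq_or_ne v (ustar k)).elim (fun h => h ▸ le_rfl) fun h => (hustar k v h).le
  have herr : x (k + 1) - xss (k + 1) = A *ᵥ (x k - xss k)
      - ((1 - A)⁻¹ * B) *ᵥ (u (k + 1) - u k) - (1 - A)⁻¹ *ᵥ (dx (k + 1) - dx k) := by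
    rw [hdyn k, hxss (k + 1),
      sub_steadyState_succ (isUnit_det_one_sub_of_spectralRadius_lt_one hA), ← hxss k]
  have hdu : _root_.enorm (u (k + 1) - u k)
      ≤ η * (spec ((2 : ℝ) • (R + lam • (Hhatᵀ * Q * Hhat) + ρgen • 1))
          * _root_.enorm (u k - ustar k)
        + 2 * lam * (spec (Hhatᵀ * Q) * (spec C * (pnorm P (x k - xss k) / √(eigMin P))
          + spec (H - Hhat) * _root_.enorm (u k)))) := by
    rw [hctrl k, sub_sub_cancel_left, enorm_neg, hout k, hH, hxss k]
    exact enorm_controlStep_le R Q lam ρgen Hhat hη.le hlam hP B C _ _ _ _ _ hgrad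
  have hdu' := mul_le_mul_of_nonneg_left hdu
    (mul_nonneg (Real.sqrt_nonneg (eigMax P)) (spec_nonneg ((1 - A)⁻¹ * B)))
  rw [herr, hc1, hc2, hc3, hc4, hγ]
  refine (pnorm_mulVec_sub_sub_le_of_lyapunov hP.posSemidef hQbar.posSemidef hLyap _ _ _ _ _).trans
    (by linear_combination hdu')

/-- Lemma 1 of the paper for the ℓ2-controller (11). -/
theorem stmt9 {n m p : ℕ}
    (A : Matrix (Fin n) (Fin n) ℝ) (B : Matrix (Fin n) (Fin m) ℝ) (C : Matrix (Fin p) (Fin n) ℝ)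
    (hA : spectralRadius ℂ (A.map Complex.ofReal) < 1)
    (Qbar P : Matrix (Fin n) (Fin n) ℝ) (hQbar : Qbar.PosDef) (hP : P.PosDef)
    (hLyap : Aᵀ * P * A - P + Qbar = 0)
    (R : Matrix (Fin m) (Fin m) ℝ) (Q : Matrix (Fin p) (Fin p) ℝ)
    (hR : R.PosSemidef) (hQ : Q.PosSemidef)
    (lam : ℝ) (hlam : 0 ≤ lam) (Hhat : Matrix (Fin p) (Fin m) ℝ)
    (r : ℕ → Fin p → ℝ) (η : ℝ) (hη : 0 < η) (ρgen : ℝ) (hρgen : 0 < ρgen)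
    (dx : ℕ → Fin n → ℝ) (dy : ℕ → Fin p → ℝ)
    (x : ℕ → Fin n → ℝ) (u : ℕ → Fin m → ℝ) (y : ℕ → Fin p → ℝ)
    (hdyn : ∀ k, x (k + 1) = A *ᵥ x k + B *ᵥ u k + dx k)
    (hout : ∀ k, y k = C *ᵥ x k + dy k)
    (hctrl : ∀ k, u (k + 1) =
      u k - (2 * η) • (R *ᵥ u k + lam • (Hhatᵀ *ᵥ (Q *ᵥ (y k - r k))) + ρgen • u k))
    (ustar : ℕ → Fin m → ℝ)
    (hustar : ∀ k, ∀ v : Fin m → ℝ, v ≠ ustar k →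
      Phi2 R Q lam ρgen Hhat (C *ᵥ ((1 - A)⁻¹ *ᵥ dx k) + dy k) (r k) (ustar k)
        < Phi2 R Q lam ρgen Hhat (C *ᵥ ((1 - A)⁻¹ *ᵥ dx k) + dy k) (r k) v)
    (H : Matrix (Fin p) (Fin m) ℝ) (hH : H = C * (1 - A)⁻¹ * B)
    (xss : ℕ → Fin n → ℝ) (hxss : ∀ k, xss k = (1 - A)⁻¹ *ᵥ (B *ᵥ u k + dx k))
    (γ c1 c2 c3 c4 : ℝ)
    (hγ : γ = eigMin Qbar / eigMax P)
    (hc1 : c1 = Real.sqrt (1 - γ) + 2 * η * lam * spec ((1 - A)⁻¹ * B) * spec (Hhatᵀ * Q)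
      * spec C * Real.sqrt (eigMax P) / Real.sqrt (eigMin P))
    (hc2 : c2 = Real.sqrt (eigMax P) * spec ((1 - A)⁻¹ * B)
      * spec ((2 : ℝ) • (R + lam • (Hhatᵀ * Q * Hhat) + ρgen • (1 : Matrix (Fin m) (Fin m) ℝ))))
    (hc3 : c3 = 2 * lam * Real.sqrt (eigMax P) * spec ((1 - A)⁻¹ * B) * spec (Hhatᵀ * Q))
    (hc4 : c4 = Real.sqrt (eigMax P) * spec ((1 - A)⁻¹)) :
    ∀ k : ℕ,
      pnorm P (x (k + 1) - xss (k + 1))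
        ≤ c1 * pnorm P (x k - xss k) + η * c2 * _root_.enorm (u k - ustar k)
          + η * c3 * spec (H - Hhat) * _root_.enorm (u k)
          + c4 * _root_.enorm (dx (k + 1) - dx k) :=
  stmt9_general A B C hA Qbar P hQbar hP hLyap R Q hR hQ lam hlam Hhat r η hη ρgen dx dy x u y hdyn
    hout hctrl ustar hustar H hH xss hxss γ c1 c2 c3 c4 hγ hc1 hc2 hc3 hc4
end

section
/- Consider the interconnection of the plant with the ℓ1-controller. Then for every k ≥ 0, ‖x_{k+1} − x_{ss,k+1}‖_P ≤ c1·‖x_k − x_{ss,k}‖_P + η·c2·‖u_k − u_k*‖ + η·c3·‖H − Ĥ‖·‖u_k‖ + c4·‖d_{x,k+1} − d_{x,k}‖ + η·c5, where c1 = √(1−γ) + 2ηλ‖(I−A)^{-1}B‖·‖ĤᵀQ‖·‖C‖·√(λ_max(P))/√(λ_min(P)), c2 = √(λ_max(P))·‖(I−A)^{-1}B‖·‖2(R + λĤᵀQĤ)‖, c3 = 2λ√(λ_max(P))·‖(I−A)^{-1}B‖·‖ĤᵀQ‖, c4 = √(λ_max(P))·‖(I−A)^{-1}‖, and c5 = 2√(λ_max(P))·‖(I−A)^{-1}B‖·‖ρ_col‖.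 -/
open Matrix BigOperators

/-- Euclidean norm of a vector in `ℝ^a`. -/
noncomputable def vecNorm {a : ℕ} (x : Fin a → ℝ) : ℝ := Real.sqrt (∑ i, x i ^ 2)

/-- Soft-thresholding: the proximal operator of `v ↦ η ρᵀ|v|`. -/
noncomputable def softThreshold {a : ℕ} (η : ℝ) (ρ : Fin a → ℝ) (v : Fin a → ℝ) :
    Fin a → ℝ :=
  fun i => Real.sign (v i) * max (|v i| - η * ρ i) 0

/-- The ℓ1-regularized objective
`Φ_{ℓ1,k}(v) = vᵀRv + λ(Ĥv + d − r)ᵀQ(Ĥv + d − r) + ∑ i, ρ_i |v_i|`. -/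
noncomputable def Phi1 {m p : ℕ} (R : Matrix (Fin m) (Fin m) ℝ) (Q : Matrix (Fin p) (Fin p) ℝ)
    (lam : ℝ) (ρcol : Fin m → ℝ) (Hhat : Matrix (Fin p) (Fin m) ℝ) (d rk : Fin p → ℝ)
    (v : Fin m → ℝ) : ℝ :=
  v ⬝ᵥ R *ᵥ v + lam * ((Hhat *ᵥ v + d - rk) ⬝ᵥ Q *ᵥ (Hhat *ᵥ v + d - rk))
    + ∑ i, ρcol i * |v i|

/-
Write `e_k = x_k - x_ss,k`. Since `(I - A) x_ss,k = B u_k + d_x,k`, one plant step gives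
`e_{k+1} = A e_k + (I - A)⁻¹ B (u_k - u_{k+1}) + (I - A)⁻¹ (d_x,k - d_x,k+1)`, and the Lyapunov
equation makes `A` a contraction of rate `√(1 - γ)` in `‖·‖_P`. The input increment is one
proximal-gradient step: soft-thresholding moves each coordinate by at most `η ρ_i`, and the gradient
the controller uses differs from the gradient `g*` of the smooth part at `u_k*` by
`S (u_k - u_k*)` plus `2λ ĤᵀQ ((H - Ĥ) u_k + C e_k)`. First-order optimality of `u_k*` for the
ℓ1-regularised objective gives `|g*_i| ≤ ρ_i`, and `‖e_k‖ ≤ ‖e_k‖_P / √λ_min(P)` closes the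
estimate.
-/

lemma vecNorm_eq_norm_toLp {a : ℕ} (x : Fin a → ℝ) : vecNorm x = ‖WithLp.toLp 2 x‖ := by
  simp [vecNorm, EuclideanSpace.norm_eq]

lemma vecNorm_add_le {a : ℕ} (x y : Fin a → ℝ) : vecNorm (x + y) ≤ vecNorm x + vecNorm y := by
  simpa only [vecNorm_eq_norm_toLp, WithLp.toLp_add] using
    norm_add_le (WithLp.toLp 2 x) (WithLp.toLp 2 y)

lemma vecNorm_smul {a : ℕ} (c : ℝ) (x : Fin a → ℝ) : vecNorm (c • x) = |c| * vecNorm x := by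
  simpa only [vecNorm_eq_norm_toLp, WithLp.toLp_smul, Real.norm_eq_abs] using
    norm_smul c (WithLp.toLp 2 x)

lemma vecNorm_sub_comm {a : ℕ} (x y : Fin a → ℝ) : vecNorm (x - y) = vecNorm (y - x) := by
  simpa only [vecNorm_eq_norm_toLp, WithLp.toLp_sub] using
    norm_sub_rev (WithLp.toLp 2 x) (WithLp.toLp 2 y)

lemma vecNorm_le_of_abs_le {a : ℕ} {x y : Fin a → ℝ} (h : ∀ i, |x i| ≤ y i) :
    vecNorm x ≤ vecNorm y := by
  refine Real.sqrt_le_sqrt (Finset.sum_le_sum fun i _ => ?_)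
  exact sq_le_sq' (abs_le.1 (h i)).1 (abs_le.1 (h i)).2

lemma spec_nonneg {a b : ℕ} (M : Matrix (Fin a) (Fin b) ℝ) : 0 ≤ spec M := norm_nonneg _

lemma vecNorm_mulVec_le {a b : ℕ} (M : Matrix (Fin a) (Fin b) ℝ) (x : Fin b → ℝ) :
    vecNorm (M *ᵥ x) ≤ spec M * vecNorm x := by
  simpa [vecNorm_eq_norm_toLp, spec, Matrix.toLpLin_apply] using
    (LinearMap.toContinuousLinearMap (Matrix.toEuclideanLin M)).le_opNorm (WithLp.toLp 2 x)

lemma isCompact_unitSphere (a : ℕ) : IsCompact {x : Fin a → ℝ | ∑ i, x i ^ 2 = 1} := by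
  have h := (PiLp.homeomorph 2 fun _ : Fin a => ℝ).symm.isCompact_preimage.2
    (isCompact_sphere (0 : EuclideanSpace ℝ (Fin a)) 1)
  convert h using 1
  ext x
  simp [EuclideanSpace.norm_eq, PiLp.homeomorph]

lemma isCompact_rayleigh {a : ℕ} (P : Matrix (Fin a) (Fin a) ℝ) :
    IsCompact {r : ℝ | ∃ x : Fin a → ℝ, ∑ i, x i ^ 2 = 1 ∧ r = x ⬝ᵥ P *ᵥ x} := by
  have h := (isCompact_unitSphere a).image
    (continuous_id.dotProduct (continuous_const.matrix_mulVec continuous_id) : Continuous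
      fun x : Fin a → ℝ => x ⬝ᵥ P *ᵥ x)
  convert h using 1
  ext r
  simp [eq_comm]

lemma sum_sq_pos_of_ne_zero {a : ℕ} {x : Fin a → ℝ} (hx : x ≠ 0) : 0 < ∑ i, x i ^ 2 := by
  obtain ⟨i, hi⟩ : ∃ i, x i ≠ 0 := Function.ne_iff.1 hx
  exact Finset.sum_pos' (fun j _ => sq_nonneg _) ⟨i, Finset.mem_univ i, by positivity⟩

lemma dotProduct_mulVec_smul_self {a : ℕ} (P : Matrix (Fin a) (Fin a) ℝ) (c : ℝ) (x : Fin a → ℝ) :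
    (c • x) ⬝ᵥ P *ᵥ (c • x) = c ^ 2 * (x ⬝ᵥ P *ᵥ x) := by
  rw [Matrix.mulVec_smul, dotProduct_smul, smul_dotProduct, smul_eq_mul, smul_eq_mul]; ring

lemma exists_unit_dotProduct_mulVec_eq {a : ℕ} (P : Matrix (Fin a) (Fin a) ℝ) {x : Fin a → ℝ}
    (hx : x ≠ 0) : ∃ y : Fin a → ℝ, ∑ i, y i ^ 2 = 1 ∧
      y ⬝ᵥ P *ᵥ y = (x ⬝ᵥ P *ᵥ x) / ∑ i, x i ^ 2 := by
  have hs := sum_sq_pos_of_ne_zero hx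
  refine ⟨(√(∑ i, x i ^ 2))⁻¹ • x, ?_, ?_⟩
  · simp only [Pi.smul_apply, smul_eq_mul, mul_pow, ← Finset.mul_sum, inv_pow,
      Real.sq_sqrt hs.le, inv_mul_cancel₀ hs.ne']
  · rw [dotProduct_mulVec_smul_self, inv_pow, Real.sq_sqrt hs.le, inv_mul_eq_div]

lemma dotProduct_mulVec_le_eigMax_mul {a : ℕ} (P : Matrix (Fin a) (Fin a) ℝ) (x : Fin a → ℝ) :
    x ⬝ᵥ P *ᵥ x ≤ eigMax P * ∑ i, x i ^ 2 := by
  rcases eq_or_ne x 0 with rfl | hx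
  · simp
  obtain ⟨y, hy, hyx⟩ := exists_unit_dotProduct_mulVec_eq P hx
  rw [← div_le_iff₀ (sum_sq_pos_of_ne_zero hx), ← hyx]
  exact le_csSup (isCompact_rayleigh P).bddAbove ⟨y, hy, rfl⟩

lemma eigMin_mul_le_dotProduct_mulVec {a : ℕ} (P : Matrix (Fin a) (Fin a) ℝ) (x : Fin a → ℝ) :
    eigMin P * ∑ i, x i ^ 2 ≤ x ⬝ᵥ P *ᵥ x := by
  rcases eq_or_ne x 0 with rfl | hx
  · simp
  obtain ⟨y, hy, hyx⟩ := exists_unit_dotProduct_mulVec_eq P hx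
  rw [← le_div_iff₀ (sum_sq_pos_of_ne_zero hx), ← hyx]
  exact csInf_le (isCompact_rayleigh P).bddBelow ⟨y, hy, rfl⟩

lemma eigMax_nonneg {a : ℕ} {P : Matrix (Fin a) (Fin a) ℝ} (hP : P.PosSemidef) : 0 ≤ eigMax P :=
  Real.sSup_nonneg fun _ ⟨x, _, hr⟩ => hr ▸ hP.dotProduct_mulVec_nonneg x

lemma eigMin_nonneg {a : ℕ} {P : Matrix (Fin a) (Fin a) ℝ} (hP : P.PosSemidef) : 0 ≤ eigMin P :=
  Real.sInf_nonneg fun _ ⟨x, _, hr⟩ => hr ▸ hP.dotProduct_mulVec_nonneg x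

lemma eigMin_pos {a : ℕ} [NeZero a] {P : Matrix (Fin a) (Fin a) ℝ} (hP : P.PosDef) :
    0 < eigMin P := by
  obtain ⟨x, hx, hPx⟩ := (isCompact_rayleigh P).sInf_mem
    ⟨_, Pi.single 0 1, by simp [Pi.single_apply], rfl⟩
  have hx0 : x ≠ 0 := by rintro rfl; simp at hx
  rw [eigMin, hPx]
  exact hP.dotProduct_mulVec_pos hx0

lemma pnorm_eq_norm {a : ℕ} {P : Matrix (Fin a) (Fin a) ℝ} (hP : P.PosSemidef) (x : Fin a → ℝ) :
    pnorm P x = @norm _ (P.toSeminormedAddCommGroup hP).toNorm x := by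
  rw [pnorm, dotProduct_comm]; rfl

lemma pnorm_add_le {a : ℕ} {P : Matrix (Fin a) (Fin a) ℝ} (hP : P.PosSemidef)
    (x y : Fin a → ℝ) : pnorm P (x + y) ≤ pnorm P x + pnorm P y := by
  simpa only [pnorm_eq_norm hP] using
    @norm_add_le _ (P.toSeminormedAddCommGroup hP).toSeminormedAddGroup x y

lemma pnorm_le_sqrt_eigMax_mul_vecNorm {a : ℕ} (P : Matrix (Fin a) (Fin a) ℝ) (x : Fin a → ℝ) :
    pnorm P x ≤ √(eigMax P) * vecNorm x := by
  rw [pnorm, vecNorm, ← Real.sqrt_mul' _ (by positivity)]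
  exact Real.sqrt_le_sqrt (dotProduct_mulVec_le_eigMax_mul P x)

lemma sqrt_eigMin_mul_vecNorm_le_pnorm {a : ℕ} (P : Matrix (Fin a) (Fin a) ℝ) (x : Fin a → ℝ) :
    √(eigMin P) * vecNorm x ≤ pnorm P x := by
  rw [pnorm, vecNorm, ← Real.sqrt_mul' _ (by positivity)]
  exact Real.sqrt_le_sqrt (eigMin_mul_le_dotProduct_mulVec P x)

lemma vecNorm_le_pnorm_div_sqrt_eigMin {a : ℕ} {P : Matrix (Fin a) (Fin a) ℝ} (hP : P.PosDef)
    (x : Fin a → ℝ) : vecNorm x ≤ pnorm P x / √(eigMin P) := by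
  rcases Nat.eq_zero_or_eq_succ_pred a with rfl | ha
  -- in dimension `0`, `eigMin P = sInf ∅ = 0` and the right-hand side is `0 / 0 = 0`
  · rw [show vecNorm x = 0 by simp [vecNorm]]
    exact div_nonneg (Real.sqrt_nonneg _) (Real.sqrt_nonneg _)
  · have : NeZero a := ⟨by omega⟩
    rw [le_div_iff₀ (Real.sqrt_pos.2 (eigMin_pos hP)), mul_comm]
    exact sqrt_eigMin_mul_vecNorm_le_pnorm P x

lemma dotProduct_mulVec_mulVec_self {a b : ℕ} (A : Matrix (Fin a) (Fin b) ℝ)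
    (P : Matrix (Fin a) (Fin a) ℝ) (x : Fin b → ℝ) :
    (A *ᵥ x) ⬝ᵥ P *ᵥ (A *ᵥ x) = x ⬝ᵥ (Aᵀ * P * A) *ᵥ x := by
  rw [← Matrix.mulVec_mulVec, ← Matrix.mulVec_mulVec, Matrix.dotProduct_mulVec x,
    Matrix.vecMul_transpose, dotProduct_comm]

lemma pnorm_mulVec_le_of_lyapunov {a : ℕ} {A P Qbar : Matrix (Fin a) (Fin a) ℝ}
    (hP : P.PosSemidef) (hQbar : Qbar.PosSemidef) (hLyap : Aᵀ * P * A - P + Qbar = 0)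
    (x : Fin a → ℝ) :
    pnorm P (A *ᵥ x) ≤ √(1 - eigMin Qbar / eigMax P) * pnorm P x := by
  set γ := eigMin Qbar / eigMax P
  have hAPA : Aᵀ * P * A = P - Qbar := by rwa [sub_add, sub_eq_zero] at hLyap
  have hγ : 0 ≤ γ := div_nonneg (eigMin_nonneg hQbar) (eigMax_nonneg hP)
  have hγmul : γ * eigMax P ≤ eigMin Qbar := by
    rcases (eigMax_nonneg hP).eq_or_lt with h | h
    · rw [← h, mul_zero]; exact eigMin_nonneg hQbar
    · rw [div_mul_cancel₀ _ h.ne']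
  have key : (A *ᵥ x) ⬝ᵥ P *ᵥ (A *ᵥ x) ≤ (1 - γ) * (x ⬝ᵥ P *ᵥ x) := by
    have hQx := eigMin_mul_le_dotProduct_mulVec Qbar x
    have hPx := dotProduct_mulVec_le_eigMax_mul P x
    rw [dotProduct_mulVec_mulVec_self, hAPA, Matrix.sub_mulVec, dotProduct_sub]
    nlinarith [mul_le_mul_of_nonneg_left hPx hγ, mul_le_mul_of_nonneg_right hγmul
      (Finset.sum_nonneg fun i _ => sq_nonneg (x i) : 0 ≤ ∑ i, x i ^ 2)]
  rw [pnorm, pnorm, ← Real.sqrt_mul' _ (by simpa using hP.dotProduct_mulVec_nonneg x)]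
  exact Real.sqrt_le_sqrt key

lemma abs_softThreshold_sub_le {a : ℕ} {η : ℝ} (hη : 0 ≤ η) {ρ : Fin a → ℝ} (hρ : ∀ i, 0 ≤ ρ i)
    (v : Fin a → ℝ) (i : Fin a) : |softThreshold η ρ v i - v i| ≤ η * ρ i := by
  have hηρ : 0 ≤ η * ρ i := mul_nonneg hη (hρ i)
  rw [softThreshold, abs_le]
  rcases lt_trichotomy (v i) 0 with h | h | h
  · rw [Real.sign_of_neg h, abs_of_neg h]
    constructor <;> cases max_cases (-v i - η * ρ i) 0 <;> linarith
  · rw [h, Real.sign_zero]; constructor <;> linarith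
  · rw [Real.sign_of_pos h, abs_of_pos h]
    constructor <;> cases max_cases (v i - η * ρ i) 0 <;> linarith

lemma vecNorm_softThreshold_sub_smul_sub_le {a : ℕ} {η : ℝ} (hη : 0 ≤ η) {ρ : Fin a → ℝ}
    (hρ : ∀ i, 0 ≤ ρ i) (v g : Fin a → ℝ) :
    vecNorm (softThreshold η ρ (v - η • g) - v) ≤ η * vecNorm ρ + η * vecNorm g := by
  have hprox : vecNorm (softThreshold η ρ (v - η • g) - (v - η • g)) ≤ η * vecNorm ρ := by
    calc _ ≤ vecNorm (η • ρ) :=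
          vecNorm_le_of_abs_le fun i => abs_softThreshold_sub_le hη hρ _ i
      _ = η * vecNorm ρ := by rw [vecNorm_smul, abs_of_nonneg hη]
  calc vecNorm (softThreshold η ρ (v - η • g) - v)
      = vecNorm (softThreshold η ρ (v - η • g) - (v - η • g) + (-η) • g) := by
        congr 1; module
    _ ≤ η * vecNorm ρ + η * vecNorm g := by
        grw [vecNorm_add_le, hprox, vecNorm_smul, abs_neg, abs_of_nonneg hη]

lemma dotProduct_add_smul_mulVec_add_smul {a : ℕ} {M : Matrix (Fin a) (Fin a) ℝ} (hM : M.IsSymm)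
    (u v : Fin a → ℝ) (t : ℝ) :
    (u + t • v) ⬝ᵥ M *ᵥ (u + t • v)
      = u ⬝ᵥ M *ᵥ u + 2 * t * (v ⬝ᵥ M *ᵥ u) + t ^ 2 * (v ⬝ᵥ M *ᵥ v) := by
  have hsymm : u ⬝ᵥ M *ᵥ v = v ⬝ᵥ M *ᵥ u := by
    rw [Matrix.dotProduct_mulVec, ← Matrix.mulVec_transpose, hM.eq, dotProduct_comm]
  simp only [Matrix.mulVec_add, Matrix.mulVec_smul, add_dotProduct, dotProduct_add,
    smul_dotProduct, dotProduct_smul, smul_eq_mul, hsymm]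
  ring

lemma abs_le_of_forall_mul_add_sq_mul_add_abs_mul_nonneg {g c ρ : ℝ}
    (h : ∀ t : ℝ, 0 ≤ t * g + t ^ 2 * c + |t| * ρ) : |g| ≤ ρ := by
  have hpos : ∀ t > 0, |g| ≤ ρ + t * c := by
    intro t ht
    have hright := h t
    have hleft := h (-t)
    rw [abs_of_pos ht] at hright
    rw [abs_neg, abs_of_pos ht] at hleft
    rw [abs_le]
    constructor <;> nlinarith
  have hlim : Filter.Tendsto (fun t => ρ + t * c) (nhdsWithin 0 (Set.Ioi 0)) (nhds ρ) := by
    refine tendsto_nhdsWithin_of_tendsto_nhds ?_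
    have hcont : Continuous fun t : ℝ => ρ + t * c := by fun_prop
    simpa using hcont.tendsto 0
  exact ge_of_tendsto hlim (eventually_nhdsWithin_of_forall hpos)

/-- Gradient of the smooth part of `Phi1`. -/
noncomputable def phi1Grad {m p : ℕ} (R : Matrix (Fin m) (Fin m) ℝ) (Q : Matrix (Fin p) (Fin p) ℝ)
    (lam : ℝ) (Hhat : Matrix (Fin p) (Fin m) ℝ) (d rk : Fin p → ℝ) (v : Fin m → ℝ) : Fin m → ℝ :=
  (2 : ℝ) • (R *ᵥ v + lam • (Hhatᵀ *ᵥ (Q *ᵥ (Hhat *ᵥ v + d - rk))))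

section Phi1

variable {m p : ℕ} {R : Matrix (Fin m) (Fin m) ℝ} {Q : Matrix (Fin p) (Fin p) ℝ} {lam : ℝ}
  {ρcol : Fin m → ℝ} {Hhat : Matrix (Fin p) (Fin m) ℝ} {d rk : Fin p → ℝ}

lemma phi1_add_smul_le (hR : R.IsSymm) (hQ : Q.IsSymm) (hρcol : ∀ i, 0 ≤ ρcol i)
    (u v : Fin m → ℝ) (t : ℝ) :
    Phi1 R Q lam ρcol Hhat d rk (u + t • v)
      ≤ Phi1 R Q lam ρcol Hhat d rk u + t * (phi1Grad R Q lam Hhat d rk u ⬝ᵥ v)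
        + t ^ 2 * (v ⬝ᵥ R *ᵥ v + lam * ((Hhat *ᵥ v) ⬝ᵥ Q *ᵥ (Hhat *ᵥ v)))
        + |t| * ∑ i, ρcol i * |v i| := by
  have hres : Hhat *ᵥ (u + t • v) + d - rk = (Hhat *ᵥ u + d - rk) + t • (Hhat *ᵥ v) := by
    rw [Matrix.mulVec_add, Matrix.mulVec_smul]; abel
  have hl1 : ∑ i, ρcol i * |(u + t • v) i| ≤ ∑ i, ρcol i * |u i| + |t| * ∑ i, ρcol i * |v i| := by
    rw [Finset.mul_sum, ← Finset.sum_add_distrib]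
    refine Finset.sum_le_sum fun i _ => ?_
    have := mul_le_mul_of_nonneg_left (abs_add_le (u i) (t * v i)) (hρcol i)
    simp only [Pi.add_apply, Pi.smul_apply, smul_eq_mul, abs_mul] at this ⊢
    linarith
  have hgrad : phi1Grad R Q lam Hhat d rk u ⬝ᵥ v
      = 2 * (v ⬝ᵥ R *ᵥ u) + 2 * lam * ((Hhat *ᵥ v) ⬝ᵥ Q *ᵥ (Hhat *ᵥ u + d - rk)) := by
    rw [phi1Grad, smul_dotProduct, add_dotProduct, smul_dotProduct, dotProduct_comm (R *ᵥ u),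
      dotProduct_comm (Hhatᵀ *ᵥ _), Matrix.dotProduct_mulVec v Hhatᵀ, Matrix.vecMul_transpose]
    simp only [smul_eq_mul]; ring
  rw [Phi1, Phi1, hres, dotProduct_add_smul_mulVec_add_smul hR,
    dotProduct_add_smul_mulVec_add_smul hQ, hgrad]
  linarith

lemma abs_phi1Grad_apply_le_of_isMin (hR : R.IsSymm) (hQ : Q.IsSymm) (hρcol : ∀ i, 0 ≤ ρcol i)
    {us : Fin m → ℝ} (hmin : ∀ v, Phi1 R Q lam ρcol Hhat d rk us ≤ Phi1 R Q lam ρcol Hhat d rk v)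
    (i : Fin m) : |phi1Grad R Q lam Hhat d rk us i| ≤ ρcol i := by
  set e : Fin m → ℝ := Pi.single i 1
  refine abs_le_of_forall_mul_add_sq_mul_add_abs_mul_nonneg
    (c := e ⬝ᵥ R *ᵥ e + lam * ((Hhat *ᵥ e) ⬝ᵥ Q *ᵥ (Hhat *ᵥ e))) fun t => ?_
  have := (hmin (us + t • e)).trans (phi1_add_smul_le hR hQ hρcol us e t)
  have hl1 : ∑ j, ρcol j * |e j| = ρcol i := by
    simp [e, Pi.single_apply, apply_ite]
  rw [dotProduct_single, mul_one, hl1] at this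
  linarith

lemma phi1Grad_sub_phi1Grad (d' : Fin p → ℝ) (v w : Fin m → ℝ) :
    phi1Grad R Q lam Hhat d' rk v - phi1Grad R Q lam Hhat d rk w
      = ((2 : ℝ) • (R + lam • (Hhatᵀ * Q * Hhat))) *ᵥ (v - w)
        + (2 * lam) • ((Hhatᵀ * Q) *ᵥ (d' - d)) := by
  simp only [phi1Grad, Matrix.smul_mulVec, Matrix.add_mulVec, ← Matrix.mulVec_mulVec,
    Matrix.mulVec_sub, Matrix.mulVec_add]
  module

lemma vecNorm_phi1Grad_le (hR : R.PosSemidef) (hQ : Q.PosSemidef) (hlam : 0 ≤ lam)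
    (hρcol : ∀ i, 0 ≤ ρcol i) {us : Fin m → ℝ}
    (hmin : ∀ v, Phi1 R Q lam ρcol Hhat d rk us ≤ Phi1 R Q lam ρcol Hhat d rk v)
    (d' : Fin p → ℝ) (v : Fin m → ℝ) :
    vecNorm (phi1Grad R Q lam Hhat d' rk v)
      ≤ spec ((2 : ℝ) • (R + lam • (Hhatᵀ * Q * Hhat))) * vecNorm (v - us) + vecNorm ρcol
        + 2 * lam * (spec (Hhatᵀ * Q) * vecNorm (d' - d)) := by
  have hsymm : ∀ {a : ℕ} {M : Matrix (Fin a) (Fin a) ℝ}, M.PosSemidef → M.IsSymm :=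
    fun hM => Matrix.isHermitian_iff_isSymm.1 hM.isHermitian
  have hstar : vecNorm (phi1Grad R Q lam Hhat d rk us) ≤ vecNorm ρcol :=
    vecNorm_le_of_abs_le (abs_phi1Grad_apply_le_of_isMin (hsymm hR) (hsymm hQ) hρcol hmin)
  calc vecNorm (phi1Grad R Q lam Hhat d' rk v)
      = vecNorm (((2 : ℝ) • (R + lam • (Hhatᵀ * Q * Hhat))) *ᵥ (v - us)
          + phi1Grad R Q lam Hhat d rk us + (2 * lam) • ((Hhatᵀ * Q) *ᵥ (d' - d))) := by
        rw [sub_eq_iff_eq_add.1 (phi1Grad_sub_phi1Grad (d := d) d' v us)]; abel_nf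
    _ ≤ _ := by
        grw [vecNorm_add_le, vecNorm_add_le, vecNorm_mulVec_le, hstar, vecNorm_smul,
          abs_of_nonneg (by positivity : (0 : ℝ) ≤ 2 * lam), vecNorm_mulVec_le]

end Phi1

lemma vecNorm_proxGradStep_sub_le {m p : ℕ} {R : Matrix (Fin m) (Fin m) ℝ}
    {Q : Matrix (Fin p) (Fin p) ℝ} {lam η : ℝ} {ρcol : Fin m → ℝ} {Hhat : Matrix (Fin p) (Fin m) ℝ}
    {d rk : Fin p → ℝ} (hR : R.PosSemidef) (hQ : Q.PosSemidef) (hlam : 0 ≤ lam) (hη : 0 ≤ η)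
    (hρcol : ∀ i, 0 ≤ ρcol i) {us : Fin m → ℝ}
    (hmin : ∀ v, Phi1 R Q lam ρcol Hhat d rk us ≤ Phi1 R Q lam ρcol Hhat d rk v)
    (d' : Fin p → ℝ) (v : Fin m → ℝ) :
    vecNorm (softThreshold η ρcol (v - η • phi1Grad R Q lam Hhat d' rk v) - v)
      ≤ η * (spec ((2 : ℝ) • (R + lam • (Hhatᵀ * Q * Hhat))) * vecNorm (v - us)
        + 2 * vecNorm ρcol + 2 * lam * (spec (Hhatᵀ * Q) * vecNorm (d' - d))) := by
  grw [vecNorm_softThreshold_sub_smul_sub_le hη hρcol,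
    vecNorm_phi1Grad_le hR hQ hlam hρcol hmin d' v]
  linarith

lemma isUnit_one_sub_of_spectralRadius_lt_one {a : ℕ} {A : Matrix (Fin a) (Fin a) ℝ}
    (hA : spectralRadius ℂ (A.map Complex.ofReal) < 1) : IsUnit (1 - A) := by
  have h1 : (1 : ℂ) ∉ spectrum ℂ (A.map Complex.ofReal) := fun h => hA.not_ge <| by
    have : (‖(1 : ℂ)‖₊ : ENNReal) ≤ spectralRadius ℂ (A.map Complex.ofReal) :=
      le_iSup₂ (f := fun k _ => (‖k‖₊ : ENNReal)) 1 h
    simpa using this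
  have hmap : (1 - A).map Complex.ofReal = 1 - A.map Complex.ofReal := by
    ext i j
    by_cases hij : i = j <;> simp [hij]
  rw [spectrum.mem_iff, not_not, map_one, ← hmap, Matrix.isUnit_iff_isUnit_det,
    isUnit_iff_ne_zero] at h1
  rw [Matrix.isUnit_iff_isUnit_det, isUnit_iff_ne_zero]
  intro hdet
  have := RingHom.map_det Complex.ofRealHom (1 - A)
  rw [hdet, map_zero] at this
  exact h1 this.symm

lemma pnorm_step_sub_steadyState_le {n m : ℕ} {A P Qbar : Matrix (Fin n) (Fin n) ℝ}
    {B : Matrix (Fin n) (Fin m) ℝ} (hU : IsUnit (1 - A)) (hP : P.PosSemidef)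
    (hQbar : Qbar.PosSemidef) (hLyap : Aᵀ * P * A - P + Qbar = 0)
    (x : Fin n → ℝ) (u u' : Fin m → ℝ) (dx dx' : Fin n → ℝ) :
    pnorm P (A *ᵥ x + B *ᵥ u + dx - (1 - A)⁻¹ *ᵥ (B *ᵥ u' + dx'))
      ≤ √(1 - eigMin Qbar / eigMax P) * pnorm P (x - (1 - A)⁻¹ *ᵥ (B *ᵥ u + dx))
        + √(eigMax P) * (spec ((1 - A)⁻¹ * B) * vecNorm (u' - u))
        + √(eigMax P) * (spec (1 - A)⁻¹ * vecNorm (dx' - dx)) := by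
  have hA : ∀ w, A *ᵥ ((1 - A)⁻¹ *ᵥ w) = (1 - A)⁻¹ *ᵥ w - w := fun w => by
    have h : (1 - A) *ᵥ ((1 - A)⁻¹ *ᵥ w) = w := by
      rw [Matrix.mulVec_mulVec, Matrix.mul_nonsing_inv _ ((Matrix.isUnit_iff_isUnit_det _).1 hU),
        Matrix.one_mulVec]
    rw [Matrix.sub_mulVec, Matrix.one_mulVec] at h
    calc A *ᵥ ((1 - A)⁻¹ *ᵥ w) = (1 - A)⁻¹ *ᵥ w - ((1 - A)⁻¹ *ᵥ w - A *ᵥ ((1 - A)⁻¹ *ᵥ w)) := by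
          abel
      _ = (1 - A)⁻¹ *ᵥ w - w := by rw [h]
  have hdecomp : A *ᵥ x + B *ᵥ u + dx - (1 - A)⁻¹ *ᵥ (B *ᵥ u' + dx')
      = A *ᵥ (x - (1 - A)⁻¹ *ᵥ (B *ᵥ u + dx))
        + (((1 - A)⁻¹ * B) *ᵥ (u - u') + (1 - A)⁻¹ *ᵥ (dx - dx')) := by
    rw [Matrix.mulVec_sub, hA]
    simp only [Matrix.mulVec_add, Matrix.mulVec_sub, ← Matrix.mulVec_mulVec]
    abel
  rw [hdecomp]
  grw [pnorm_add_le hP, pnorm_add_le hP, pnorm_mulVec_le_of_lyapunov hP hQbar hLyap,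
    pnorm_le_sqrt_eigMax_mul_vecNorm P (_ *ᵥ (u - u')),
    pnorm_le_sqrt_eigMax_mul_vecNorm P (_ *ᵥ (dx - dx')), vecNorm_mulVec_le, vecNorm_mulVec_le,
    vecNorm_sub_comm u, vecNorm_sub_comm dx]
  linarith

theorem stmt10_general {n m p : ℕ}
    (A : Matrix (Fin n) (Fin n) ℝ) (B : Matrix (Fin n) (Fin m) ℝ) (C : Matrix (Fin p) (Fin n) ℝ)
    (hA : spectralRadius ℂ (A.map Complex.ofReal) < 1)
    (Qbar P : Matrix (Fin n) (Fin n) ℝ) (hQbar : Qbar.PosDef) (hP : P.PosDef)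
    (hLyap : Aᵀ * P * A - P + Qbar = 0)
    (R : Matrix (Fin m) (Fin m) ℝ) (Q : Matrix (Fin p) (Fin p) ℝ)
    (hR : R.PosSemidef) (hQ : Q.PosSemidef)
    (lam : ℝ) (hlam : 0 ≤ lam) (Hhat : Matrix (Fin p) (Fin m) ℝ)
    (r : ℕ → Fin p → ℝ) (η : ℝ) (hη : 0 < η)
    (ρcol : Fin m → ℝ) (hρcol : ∀ i, 0 ≤ ρcol i)
    (dx : ℕ → Fin n → ℝ) (dy : ℕ → Fin p → ℝ)
    (x : ℕ → Fin n → ℝ) (u : ℕ → Fin m → ℝ) (y : ℕ → Fin p → ℝ)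
    (hdyn : ∀ k, x (k + 1) = A *ᵥ x k + B *ᵥ u k + dx k)
    (hout : ∀ k, y k = C *ᵥ x k + dy k)
    (hctrl : ∀ k, u (k + 1) =
      softThreshold η ρcol (u k - (2 * η) • (R *ᵥ u k + lam • (Hhatᵀ *ᵥ (Q *ᵥ (y k - r k))))))
    (ustar : ℕ → Fin m → ℝ)
    (hustar : ∀ k, ∀ v : Fin m → ℝ, v ≠ ustar k →
      Phi1 R Q lam ρcol Hhat (C *ᵥ ((1 - A)⁻¹ *ᵥ dx k) + dy k) (r k) (ustar k)
        < Phi1 R Q lam ρcol Hhat (C *ᵥ ((1 - A)⁻¹ *ᵥ dx k) + dy k) (r k) v)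
    (H : Matrix (Fin p) (Fin m) ℝ) (hH : H = C * (1 - A)⁻¹ * B)
    (xss : ℕ → Fin n → ℝ) (hxss : ∀ k, xss k = (1 - A)⁻¹ *ᵥ (B *ᵥ u k + dx k))
    (γ c1 c2 c3 c4 c5 : ℝ)
    (hγ : γ = eigMin Qbar / eigMax P)
    (hc1 : c1 = Real.sqrt (1 - γ) + 2 * η * lam * spec ((1 - A)⁻¹ * B) * spec (Hhatᵀ * Q)
      * spec C * Real.sqrt (eigMax P) / Real.sqrt (eigMin P))
    (hc2 : c2 = Real.sqrt (eigMax P) * spec ((1 - A)⁻¹ * B)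
      * spec ((2 : ℝ) • (R + lam • (Hhatᵀ * Q * Hhat))))
    (hc3 : c3 = 2 * lam * Real.sqrt (eigMax P) * spec ((1 - A)⁻¹ * B) * spec (Hhatᵀ * Q))
    (hc4 : c4 = Real.sqrt (eigMax P) * spec ((1 - A)⁻¹))
    (hc5 : c5 = 2 * Real.sqrt (eigMax P) * spec ((1 - A)⁻¹ * B) * vecNorm ρcol) :
    ∀ k : ℕ,
      pnorm P (x (k + 1) - xss (k + 1))
        ≤ c1 * pnorm P (x k - xss k) + η * c2 * vecNorm (u k - ustar k)
          + η * c3 * spec (H - Hhat) * vecNorm (u k)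
          + c4 * vecNorm (dx (k + 1) - dx k) + η * c5 := by
  intro k
  set d := C *ᵥ ((1 - A)⁻¹ *ᵥ dx k) + dy k
  set e := x k - xss k
  have hmin : ∀ v, Phi1 R Q lam ρcol Hhat d (r k) (ustar k) ≤ Phi1 R Q lam ρcol Hhat d (r k) v :=
    fun v => (eq_or_ne v (ustar k)).elim (fun h => h ▸ le_rfl) fun h => (hustar k v h).le
  -- the controller is a proximal-gradient step on `Phi1` with `d` replaced by `y k - Ĥ u k`
  have hstep : u (k + 1) = softThreshold η ρcol
      (u k - η • phi1Grad R Q lam Hhat (y k - Hhat *ᵥ u k) (r k) (u k)) := by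
    rw [hctrl k, phi1Grad, smul_smul, mul_comm, add_sub_cancel]
  have hdist : y k - Hhat *ᵥ u k - d = (H - Hhat) *ᵥ u k + C *ᵥ e := by
    simp only [d, e, hout k, hxss k, hH, Matrix.sub_mulVec, Matrix.mulVec_sub, Matrix.mulVec_add,
      ← Matrix.mulVec_mulVec]
    abel
  have hC := spec_nonneg C
  have hHQ := spec_nonneg (Hhatᵀ * Q)
  have hMB := spec_nonneg ((1 - A)⁻¹ * B)
  have hplant := pnorm_step_sub_steadyState_le (B := B) (isUnit_one_sub_of_spectralRadius_lt_one hA)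
    hP.posSemidef hQbar.posSemidef hLyap (x k) (u k) (u (k + 1)) (dx k) (dx (k + 1))
  rw [← hxss, ← hxss, ← hdyn] at hplant
  rw [hc1, hc2, hc3, hc4, hc5, hγ]
  grw [hplant, hstep, vecNorm_proxGradStep_sub_le hR hQ hlam hη.le hρcol hmin, hdist,
    vecNorm_add_le, vecNorm_mulVec_le, vecNorm_mulVec_le, vecNorm_le_pnorm_div_sqrt_eigMin hP e]
  exact le_of_eq (by ring)

/-- Lemma 1 of the paper for the ℓ1-controller (12). -/
theorem stmt10 {n m p : ℕ}
    (A : Matrix (Fin n) (Fin n) ℝ) (B : Matrix (Fin n) (Fin m) ℝ) (C : Matrix (Fin p) (Fin n) ℝ)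
    (hA : spectralRadius ℂ (A.map Complex.ofReal) < 1)
    (Qbar P : Matrix (Fin n) (Fin n) ℝ) (hQbar : Qbar.PosDef) (hP : P.PosDef)
    (hLyap : Aᵀ * P * A - P + Qbar = 0)
    (R : Matrix (Fin m) (Fin m) ℝ) (Q : Matrix (Fin p) (Fin p) ℝ)
    (hR : R.PosSemidef) (hQ : Q.PosSemidef)
    (lam : ℝ) (hlam : 0 ≤ lam) (Hhat : Matrix (Fin p) (Fin m) ℝ)
    (hS : ((2 : ℝ) • (R + lam • (Hhatᵀ * Q * Hhat))).PosDef)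
    (r : ℕ → Fin p → ℝ) (η : ℝ) (hη : 0 < η)
    (ρcol : Fin m → ℝ) (hρcol : ∀ i, 0 ≤ ρcol i)
    (dx : ℕ → Fin n → ℝ) (dy : ℕ → Fin p → ℝ)
    (x : ℕ → Fin n → ℝ) (u : ℕ → Fin m → ℝ) (y : ℕ → Fin p → ℝ)
    (hdyn : ∀ k, x (k + 1) = A *ᵥ x k + B *ᵥ u k + dx k)
    (hout : ∀ k, y k = C *ᵥ x k + dy k)
    (hctrl : ∀ k, u (k + 1) =
      softThreshold η ρcol (u k - (2 * η) • (R *ᵥ u k + lam • (Hhatᵀ *ᵥ (Q *ᵥ (y k - r k))))))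
    (ustar : ℕ → Fin m → ℝ)
    (hustar : ∀ k, ∀ v : Fin m → ℝ, v ≠ ustar k →
      Phi1 R Q lam ρcol Hhat (C *ᵥ ((1 - A)⁻¹ *ᵥ dx k) + dy k) (r k) (ustar k)
        < Phi1 R Q lam ρcol Hhat (C *ᵥ ((1 - A)⁻¹ *ᵥ dx k) + dy k) (r k) v)
    (H : Matrix (Fin p) (Fin m) ℝ) (hH : H = C * (1 - A)⁻¹ * B)
    (xss : ℕ → Fin n → ℝ) (hxss : ∀ k, xss k = (1 - A)⁻¹ *ᵥ (B *ᵥ u k + dx k))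
    (γ c1 c2 c3 c4 c5 : ℝ)
    (hγ : γ = eigMin Qbar / eigMax P)
    (hc1 : c1 = Real.sqrt (1 - γ) + 2 * η * lam * spec ((1 - A)⁻¹ * B) * spec (Hhatᵀ * Q)
      * spec C * Real.sqrt (eigMax P) / Real.sqrt (eigMin P))
    (hc2 : c2 = Real.sqrt (eigMax P) * spec ((1 - A)⁻¹ * B)
      * spec ((2 : ℝ) • (R + lam • (Hhatᵀ * Q * Hhat))))
    (hc3 : c3 = 2 * lam * Real.sqrt (eigMax P) * spec ((1 - A)⁻¹ * B) * spec (Hhatᵀ * Q))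
    (hc4 : c4 = Real.sqrt (eigMax P) * spec ((1 - A)⁻¹))
    (hc5 : c5 = 2 * Real.sqrt (eigMax P) * spec ((1 - A)⁻¹ * B) * vecNorm ρcol) :
    ∀ k : ℕ,
      pnorm P (x (k + 1) - xss (k + 1))
        ≤ c1 * pnorm P (x k - xss k) + η * c2 * vecNorm (u k - ustar k)
          + η * c3 * spec (H - Hhat) * vecNorm (u k)
          + c4 * vecNorm (dx (k + 1) - dx k) + η * c5 :=
  stmt10_general A B C hA Qbar P hQbar hP hLyap R Q hR hQ lam hlam Hhat r η hη ρcol hρcol dx dy x u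
    y hdyn hout hctrl ustar hustar H hH xss hxss γ c1 c2 c3 c4 c5 hγ hc1 hc2 hc3 hc4 hc5
end

section
/- Let γ ∈ (0,1), let μ, L > 0 with μ ≤ L, and let a, b > 0. For η ∈ [0, 2μ/L²] define α(η) = √(1 − η(2μ − ηL²)), c1(η) = √(1−γ) + b·η, and g(η) = a·η² + α(η) + c1(η) − α(η)·c1(η). Then g(0) = 1 and there exists η* ∈ (0, 2μ/L²) such that g(η) < 1 for all η ∈ (0, η*). -/
/-!
At `η = 0` we have `α = 1`, so `g(0) = 1`. Differentiating at `0` gives `α'(0) = -μ` and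
`c1'(0) = b`, hence `g'(0) = -μ + b - (-μ √(1-γ) + b) = -(1 - √(1-γ)) μ < 0`. A function with
negative right derivative drops strictly below its value just to the right of the point, and
the resulting interval can be taken inside `(0, μ / L²]`.
-/

open Filter Topology Set

theorem HasDerivWithinAt.eventually_lt_of_neg_right {f : ℝ → ℝ} {f' x : ℝ}
    (hf : HasDerivWithinAt f f' (Ioi x) x) (hf' : f' < 0) : ∀ᶠ y in 𝓝[>] x, f y < f x := by
  filter_upwards [hf.limsup_slope_le' (lt_irrefl x) hf', self_mem_nhdsWithin] with y hslope hxy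
  exact (slope_neg_iff_of_le (le_of_lt hxy)).1 hslope

theorem hasDerivAt_sqrt_one_sub_mul_zero (μ L : ℝ) :
    HasDerivAt (fun η : ℝ => √(1 - η * (2 * μ - η * L ^ 2))) (-μ) 0 := by
  have hrad : HasDerivAt (fun η : ℝ => 1 - η * (2 * μ - η * L ^ 2)) (-(2 * μ)) 0 :=
    (((hasDerivAt_id' 0).mul ((hasDerivAt_const 0 (2 * μ)).sub
      ((hasDerivAt_id' 0).mul_const (L ^ 2)))).const_sub 1).congr_deriv (by simp)
  exact (hrad.sqrt (by norm_num)).congr_deriv (by norm_num; ring)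

theorem hasDerivAt_stepSizeBound_zero (μ L a b s : ℝ) :
    HasDerivAt (fun η : ℝ => a * η ^ 2 + √(1 - η * (2 * μ - η * L ^ 2)) + (s + b * η)
      - √(1 - η * (2 * μ - η * L ^ 2)) * (s + b * η)) (-(μ * (1 - s))) 0 := by
  have hα := hasDerivAt_sqrt_one_sub_mul_zero μ L
  have hc : HasDerivAt (fun η : ℝ => s + b * η) b 0 :=
    (((hasDerivAt_id' 0).const_mul b).const_add s).congr_deriv (mul_one b)
  exact (((((hasDerivAt_pow 2 0).const_mul a).add hα).add hc).sub (hα.mul hc)).congr_deriv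
    (by norm_num; ring)

theorem stmt16_general (γ μ L a b : ℝ) (hγ0 : 0 < γ)
    (hμ : 0 < μ) (hL : 0 < L)
    (α c1 g : ℝ → ℝ)
    (hα : ∀ η, α η = Real.sqrt (1 - η * (2 * μ - η * L ^ 2)))
    (hc1 : ∀ η, c1 η = Real.sqrt (1 - γ) + b * η)
    (hg : ∀ η, g η = a * η ^ 2 + α η + c1 η - α η * c1 η) :
    g 0 = 1 ∧ ∃ ηstar : ℝ, 0 < ηstar ∧ ηstar < 2 * μ / L ^ 2 ∧
      ∀ η : ℝ, 0 < η → η < ηstar → g η < 1 := by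
  have hg0 : g 0 = 1 := by simp [hg, hα, hc1]
  have hs : √(1 - γ) < 1 := (Real.sqrt_lt' one_pos).2 (by linarith)
  have hderiv : HasDerivAt g (-(μ * (1 - √(1 - γ)))) 0 := by
    simpa only [funext hg, funext hα, funext hc1] using
      hasDerivAt_stepSizeBound_zero μ L a b (√(1 - γ))
  have hdecr : ∀ᶠ η in 𝓝[>] 0, g η < 1 :=
    hg0 ▸ hderiv.hasDerivWithinAt.eventually_lt_of_neg_right (by nlinarith)
  have hμL2 : 0 < μ / L ^ 2 := by positivity
  obtain ⟨ηstar, ⟨hpos, hle⟩, hsub⟩ := (mem_nhdsGT_iff_exists_mem_Ioc_Ioo_subset hμL2).1 hdecr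
  refine ⟨hg0, ηstar, hpos, ?_, fun η hη hηlt => hsub ⟨hη, hηlt⟩⟩
  calc ηstar ≤ μ / L ^ 2 := hle
    _ < 2 * μ / L ^ 2 := by rw [mul_div_assoc]; linarith

/-- Step-size existence argument in the proof of Theorem 2: `g(0) = 1` and `g(η) < 1`
for all sufficiently small positive `η`. -/
theorem stmt16 (γ μ L a b : ℝ) (hγ0 : 0 < γ) (hγ1 : γ < 1)
    (hμ : 0 < μ) (hL : 0 < L) (hμL : μ ≤ L) (ha : 0 < a) (hb : 0 < b)
    (α c1 g : ℝ → ℝ)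
    (hα : ∀ η, α η = Real.sqrt (1 - η * (2 * μ - η * L ^ 2)))
    (hc1 : ∀ η, c1 η = Real.sqrt (1 - γ) + b * η)
    (hg : ∀ η, g η = a * η ^ 2 + α η + c1 η - α η * c1 η) :
    g 0 = 1 ∧ ∃ ηstar : ℝ, 0 < ηstar ∧ ηstar < 2 * μ / L ^ 2 ∧
      ∀ η : ℝ, 0 < η → η < ηstar → g η < 1 :=
  stmt16_general γ μ L a b hγ0 hμ hL α c1 g hα hc1 hg
end
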